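/- arXiv:2312.08562 — 6 statements merged into one kernel-verified Lean document; each statement's English description precedes it below -/
import Mathlib

section
/- There exists a graph E (two parallel edges e₁, e₂ from v to w) and a graph F (a loop e at v plus an edge g from v to w) with a vertex-injective path homomorphism f given by f(e₁) = g, f(e₂) = eg, such that f satisfies the monotonicity condition on edges, but the induced path homomorphism f̄ : FP(Ē) → FP(F̄) between the extended (double) graphs fails the monotonicity condition: f̄(e₁*) = g* ⪯ g*e* = f̄(e₂*) while e₁* ≠ e₂*. -/
/-!
`f` is the path homomorphism substituting `g` for `e₁` and `e g` for `e₂`. Prefix comparison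
reads paths from the left, where `g` and `e g` already differ, so `f` is monotone on edges.
Starring reverses paths: `f̄(e₂*) = (e g)* = g* e*`, which extends `f̄(e₁*) = g*`.
-/

/-- A directed graph. -/
structure DirGraph where
  V : Type
  E : Type
  src : E → V
  tgt : E → V

namespace DirGraph

/-- Finite paths from `v` to `w` in a graph. -/
inductive Path (G : DirGraph) : G.V → G.V → Type
  | nil (v : G.V) : Path G v v
  | cons (e : G.E) {w : G.V} (p : Path G (G.tgt e) w) : Path G (G.src e) w

/-- Concatenation of composable indexed paths. -/
def Path.comp {G : DirGraph} : ∀ {a b c : G.V}, G.Path a b → G.Path b c → G.Path a c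
  | _, _, _, .nil _, q => q
  | _, _, _, .cons e p, q => .cons e (p.comp q)

/-- The list of edges of a path. -/
def Path.edges {G : DirGraph} : ∀ {a b : G.V}, G.Path a b → List G.E
  | _, _, .nil _ => []
  | _, _, .cons e p => e :: p.edges

/-- The set of all finite paths of a graph (with arbitrary endpoints). -/
def FP (G : DirGraph) : Type := Σ (v : G.V) (w : G.V), G.Path v w

/-- The source (beginning) of a finite path. -/
def FP.src {G : DirGraph} (p : G.FP) : G.V := p.1

/-- The target (end) of a finite path. -/
def FP.tgt {G : DirGraph} (p : G.FP) : G.V := p.2.1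

/-- The list of edges of a finite path. -/
def FP.edges {G : DirGraph} (p : G.FP) : List G.E := p.2.2.edges

/-- The length of a finite path. -/
def FP.length {G : DirGraph} (p : G.FP) : ℕ := p.edges.length

/-- A vertex, viewed as a length-zero finite path. -/
def FP.ofVertex {G : DirGraph} (v : G.V) : G.FP := ⟨v, v, .nil v⟩

/-- An edge, viewed as a length-one finite path. -/
def FP.ofEdge {G : DirGraph} (e : G.E) : G.FP :=
  ⟨G.src e, G.tgt e, .cons e (.nil (G.tgt e))⟩

/-- Concatenation of composable finite paths. -/
def FP.comp {G : DirGraph} (p q : G.FP) (h : p.tgt = q.src) : G.FP :=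
  ⟨p.1, q.2.1, p.2.2.comp (cast (congrArg (fun x => G.Path x q.2.1) h.symm) q.2.2)⟩

/-- The prefix (extension) relation `α ⪯ β` on finite paths: `β = αγ` for some path `γ`. -/
def FP.le {G : DirGraph} (p q : G.FP) : Prop :=
  ∃ (r : G.FP) (h : p.tgt = r.src), q = p.comp r h

/-- A path homomorphism of graphs: a map on finite paths sending vertices to
vertices, intertwining the extended source and target maps, and preserving
concatenation of composable paths. -/
def IsPathHom {G H : DirGraph} (f : G.FP → H.FP) : Prop :=
  (∀ v : G.V, ∃ w : H.V, f (FP.ofVertex v) = FP.ofVertex w) ∧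
  (∀ p : G.FP, f (FP.ofVertex p.src) = FP.ofVertex (f p).src) ∧
  (∀ p : G.FP, f (FP.ofVertex p.tgt) = FP.ofVertex (f p).tgt) ∧
  (∀ (p q : G.FP) (h : p.tgt = q.src),
    ∃ h' : (f p).tgt = (f q).src, f (p.comp q h) = (f p).comp (f q) h')

/-- A map on finite paths is vertex-injective if it is injective on vertices. -/
def VertexInjective {G H : DirGraph} (f : G.FP → H.FP) : Prop :=
  Function.Injective (fun v : G.V => f (FP.ofVertex v))

/-- The monotonicity condition on edges: `f(e) ⪯ f(e′)` implies `e = e′`. -/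
def EdgeMonotone {G H : DirGraph} (f : G.FP → H.FP) : Prop :=
  ∀ e e' : G.E, FP.le (f (FP.ofEdge e)) (f (FP.ofEdge e')) → e = e'

end DirGraph

namespace DirGraph

/-- The extended (double) graph `Ē` of `E`: same vertices, edges `E¹ ⊔ (E¹)*`,
with `s(e*) = t(e)` and `t(e*) = s(e)`. -/
def ext (G : DirGraph) : DirGraph where
  V := G.V
  E := G.E ⊕ G.E
  src := Sum.elim G.src G.tgt
  tgt := Sum.elim G.tgt G.src

/-- The canonical inclusion of paths of `E` into paths of the extended graph `Ē`. -/
def Path.inclExt {G : DirGraph} : ∀ {v w : G.V}, G.Path v w → G.ext.Path v w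
  | _, _, .nil v => Path.nil (G := G.ext) v
  | _, _, .cons e p => Path.cons (G := G.ext) (Sum.inl e) p.inclExt

/-- The star (reversal) of a path of `E`, as a path of the extended graph `Ē`:
`(e₁…eₙ)* = eₙ*…e₁*`. -/
def Path.star {G : DirGraph} : ∀ {v w : G.V}, G.Path v w → G.ext.Path w v
  | _, _, .nil v => Path.nil (G := G.ext) v
  | _, _, .cons e p =>
      Path.comp p.star (Path.cons (G := G.ext) (Sum.inr e) (Path.nil (G := G.ext) (G.src e)))

/-- The canonical inclusion `FP(E) → FP(Ē)`. -/
def FP.inclExt {G : DirGraph} (p : G.FP) : G.ext.FP := ⟨p.1, p.2.1, p.2.2.inclExt⟩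

/-- The star `p ↦ p*` of finite paths, `FP(E) → FP(Ē)`. -/
def FP.star {G : DirGraph} (p : G.FP) : G.ext.FP := ⟨p.2.1, p.1, p.2.2.star⟩

/-- `fbar` is the path homomorphism `Ē → F̄` of extended graphs induced by a
path homomorphism `f : E → F`: it is a path homomorphism agreeing with `f` on
vertices and satisfying `f̄(e) = f(e)` and `f̄(e*) = f(e)*` on the two kinds of
edges of `Ē`. -/
def IsBar {G H : DirGraph} (f : G.FP → H.FP) (fbar : G.ext.FP → H.ext.FP) : Prop :=
  IsPathHom fbar ∧
  (∀ (v : G.V) (w : H.V), f (FP.ofVertex v) = FP.ofVertex w →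
    fbar (FP.ofVertex (G := G.ext) v) = FP.ofVertex (G := H.ext) w) ∧
  (∀ e : G.E, fbar (FP.ofEdge (G := G.ext) (Sum.inl e)) = FP.inclExt (f (FP.ofEdge e))) ∧
  (∀ e : G.E, fbar (FP.ofEdge (G := G.ext) (Sum.inr e)) = FP.star (f (FP.ofEdge e)))

end DirGraph

namespace DirGraph

/-- The graph `E` with two vertices `v = false`, `w = true` and two parallel
edges `e₁ = false`, `e₂ = true` from `v` to `w`. -/
def E8 : DirGraph where
  V := Bool
  E := Bool
  src := fun _ => false
  tgt := fun _ => true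

/-- The graph `F` with two vertices `v = false`, `w = true`, a loop
`e = true` at `v`, and an edge `g = false` from `v` to `w`. -/
def F8 : DirGraph where
  V := Bool
  E := Bool
  src := fun _ => false
  tgt := fun b => !b

end DirGraph

namespace DirGraph

variable {G H : DirGraph}

theorem Path.comp_assoc {a b c d : G.V} (p : G.Path a b) (q : G.Path b c) (r : G.Path c d) :
    (p.comp q).comp r = p.comp (q.comp r) := by
  induction p with
  | nil => rfl
  | cons e p ih => simp only [Path.comp, ih]

theorem Path.comp_nil {a b : G.V} (p : G.Path a b) : p.comp (.nil b) = p := by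
  induction p with
  | nil => rfl
  | cons e p ih => simp only [Path.comp, ih]

theorem Path.edges_comp {a b c : G.V} (p : G.Path a b) (q : G.Path b c) :
    (p.comp q).edges = p.edges ++ q.edges := by
  induction p with
  | nil => rfl
  | cons e p ih => simp only [Path.comp, Path.edges, ih, List.cons_append]

theorem FP.edges_comp (p q : G.FP) (h : p.tgt = q.src) :
    (p.comp q h).edges = p.edges ++ q.edges := by
  obtain ⟨a, b, p⟩ := p
  obtain ⟨c, d, q⟩ := q
  obtain rfl : b = c := h
  exact Path.edges_comp p q

theorem FP.le.edges_isPrefix {p q : G.FP} (h : p.le q) : p.edges <+: q.edges := by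
  obtain ⟨r, hr, rfl⟩ := h
  exact ⟨r.edges, (FP.edges_comp p r hr).symm⟩

def Path.subst (σ : G.V → H.V) (φ : ∀ e : G.E, H.Path (σ (G.src e)) (σ (G.tgt e))) :
    ∀ {a b : G.V}, G.Path a b → H.Path (σ a) (σ b)
  | _, _, .nil v => .nil (σ v)
  | _, _, .cons e p => (φ e).comp (p.subst σ φ)

theorem Path.subst_comp (σ : G.V → H.V) (φ : ∀ e : G.E, H.Path (σ (G.src e)) (σ (G.tgt e)))
    {a b c : G.V} (p : G.Path a b) (q : G.Path b c) :
    (p.comp q).subst σ φ = (p.subst σ φ).comp (q.subst σ φ) := by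
  induction p with
  | nil => rfl
  | cons e p ih => simp only [Path.comp, Path.subst, ih, Path.comp_assoc]

def FP.subst (σ : G.V → H.V) (φ : ∀ e : G.E, H.Path (σ (G.src e)) (σ (G.tgt e)))
    (p : G.FP) : H.FP :=
  ⟨σ p.1, σ p.2.1, p.2.2.subst σ φ⟩

theorem FP.subst_ofEdge (σ : G.V → H.V) (φ : ∀ e : G.E, H.Path (σ (G.src e)) (σ (G.tgt e)))
    (e : G.E) : FP.subst σ φ (.ofEdge e) = ⟨σ (G.src e), σ (G.tgt e), φ e⟩ := by
  simp only [FP.subst, FP.ofEdge, Path.subst, Path.comp_nil]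
  rfl

theorem FP.edges_subst_ofEdge (σ : G.V → H.V)
    (φ : ∀ e : G.E, H.Path (σ (G.src e)) (σ (G.tgt e))) (e : G.E) :
    (FP.subst σ φ (.ofEdge e)).edges = (φ e).edges := by
  rw [FP.subst_ofEdge]
  rfl

theorem isPathHom_subst (σ : G.V → H.V) (φ : ∀ e : G.E, H.Path (σ (G.src e)) (σ (G.tgt e))) :
    IsPathHom (FP.subst σ φ) := by
  refine ⟨fun v => ⟨σ v, rfl⟩, fun _ => rfl, fun _ => rfl, ?_⟩
  rintro ⟨a, b, p⟩ ⟨c, d, q⟩ h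
  obtain rfl : b = c := h
  exact ⟨rfl, congrArg (fun r => (⟨σ a, σ d, r⟩ : H.FP)) (Path.subst_comp σ φ p q)⟩

theorem vertexInjective_subst {σ : G.V → H.V} (hσ : σ.Injective)
    (φ : ∀ e : G.E, H.Path (σ (G.src e)) (σ (G.tgt e))) :
    VertexInjective (FP.subst σ φ) :=
  fun _ _ h => hσ (congrArg Sigma.fst h)

theorem edgeMonotone_subst (σ : G.V → H.V) (φ : ∀ e : G.E, H.Path (σ (G.src e)) (σ (G.tgt e)))
    (h : ∀ e e' : G.E, (φ e).edges <+: (φ e').edges → e = e') :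
    EdgeMonotone (FP.subst σ φ) := fun e e' hle =>
  h e e' (by simpa only [FP.edges_subst_ofEdge] using hle.edges_isPrefix)

theorem FP.le_comp (p q : G.FP) (h : p.tgt = q.src) : p.le (p.comp q h) :=
  ⟨q, h, rfl⟩

/-- The edge paths of the example: `e₁ ↦ g` and `e₂ ↦ e g`. -/
def f8Edge : ∀ e : E8.E, F8.Path (E8.src e) (E8.tgt e)
  | false => .cons (G := F8) false (.nil (G := F8) true)
  | true => .cons (G := F8) true (.cons (G := F8) false (.nil (G := F8) true))

theorem f8Edge_edges_isPrefix (e e' : E8.E) (h : (f8Edge e).edges <+: (f8Edge e').edges) :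
    e = e' := by
  cases e <;> cases e'
  all_goals first | rfl | exact Bool.noConfusion (List.cons_prefix_cons.mp h).1

end DirGraph

open DirGraph in
/-- There is a vertex-injective path homomorphism `f : E → F` (with `E` two
parallel edges `e₁, e₂ : v → w` and `F` a loop `e` at `v` plus an edge
`g : v → w`) given by `f(e₁) = g` and `f(e₂) = eg`, which satisfies the
monotonicity condition on edges, while the induced path homomorphism
`f̄ : FP(Ē) → FP(F̄)` of extended graphs fails it:
`f̄(e₁*) = g* ⪯ g*e* = f̄(e₂*)` although `e₁* ≠ e₂*`. -/
theorem bar_of_monotone_not_monotone :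
    ∃ f : E8.FP → F8.FP,
      IsPathHom f ∧ VertexInjective f ∧ EdgeMonotone f ∧
      f (FP.ofEdge false) = FP.ofEdge false ∧
      f (FP.ofEdge true) = FP.comp (FP.ofEdge (G := F8) true) (FP.ofEdge (G := F8) false) rfl ∧
      ∀ fbar : E8.ext.FP → F8.ext.FP, IsBar f fbar →
        FP.le (fbar (FP.ofEdge (G := E8.ext) (Sum.inr false)))
            (fbar (FP.ofEdge (G := E8.ext) (Sum.inr true))) ∧
        (Sum.inr false : E8.ext.E) ≠ Sum.inr true ∧
        ¬ EdgeMonotone fbar := by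
  refine ⟨FP.subst id f8Edge, isPathHom_subst _ _,
    vertexInjective_subst (G := E8) (H := F8) (σ := id) Function.injective_id _,
    edgeMonotone_subst _ _ f8Edge_edges_isPrefix, rfl, rfl, ?_⟩
  rintro fbar ⟨-, -, -, hstar⟩
  have hle : FP.le (fbar (FP.ofEdge (G := E8.ext) (Sum.inr false)))
      (fbar (FP.ofEdge (G := E8.ext) (Sum.inr true))) := by
    rw [hstar false, hstar true]
    -- `f̄(e₂*) = (e g)*` is `g* e*` by computation
    exact FP.le_comp _ (FP.ofEdge (G := F8.ext) (Sum.inr true)) rfl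
  have hne : (Sum.inr false : E8.ext.E) ≠ Sum.inr true := Sum.inr_injective.ne Bool.false_ne_true
  exact ⟨hle, hne, fun hmono => hne (hmono _ _ hle)⟩
end

section
/- Let f : FP(E) → FP(F) be a vertex-injective path homomorphism satisfying the monotonicity condition on edges, and let e, e′ be distinct edges of E with the same source. Then neither f(e) nor f(e′) is a vertex, both are paths of positive length, and there is an index i ≤ min(len f(e), len f(e′)) at which the i-th edges of f(e) and f(e′) differ. -/
/-- A directed graph. -/
structure DGraph where
  V : Type
  E : Type
  src : E → V
  tgt : E → V

namespace DGraph

/-- Finite paths from `v` to `w` in a graph. -/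
inductive Path (G : DGraph) : G.V → G.V → Type
  | nil (v : G.V) : Path G v v
  | cons (e : G.E) {w : G.V} (p : Path G (G.tgt e) w) : Path G (G.src e) w

/-- Concatenation of composable indexed paths. -/
def Path.comp {G : DGraph} : ∀ {a b c : G.V}, G.Path a b → G.Path b c → G.Path a c
  | _, _, _, .nil _, q => q
  | _, _, _, .cons e p, q => .cons e (p.comp q)

/-- The list of edges of a path. -/
def Path.edges {G : DGraph} : ∀ {a b : G.V}, G.Path a b → List G.E
  | _, _, .nil _ => []
  | _, _, .cons e p => e :: p.edges

/-- The set of all finite paths of a graph (with arbitrary endpoints). -/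
def FP (G : DGraph) : Type := Σ (v : G.V) (w : G.V), G.Path v w

/-- The source (beginning) of a finite path. -/
def FP.src {G : DGraph} (p : G.FP) : G.V := p.1

/-- The target (end) of a finite path. -/
def FP.tgt {G : DGraph} (p : G.FP) : G.V := p.2.1

/-- The list of edges of a finite path. -/
def FP.edges {G : DGraph} (p : G.FP) : List G.E := p.2.2.edges

/-- The length of a finite path. -/
def FP.length {G : DGraph} (p : G.FP) : ℕ := p.edges.length

/-- A vertex, viewed as a length-zero finite path. -/
def FP.ofVertex {G : DGraph} (v : G.V) : G.FP := ⟨v, v, .nil v⟩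

/-- An edge, viewed as a length-one finite path. -/
def FP.ofEdge {G : DGraph} (e : G.E) : G.FP :=
  ⟨G.src e, G.tgt e, .cons e (.nil (G.tgt e))⟩

/-- Concatenation of composable finite paths. -/
def FP.comp {G : DGraph} (p q : G.FP) (h : p.tgt = q.src) : G.FP :=
  ⟨p.1, q.2.1, p.2.2.comp (cast (congrArg (fun x => G.Path x q.2.1) h.symm) q.2.2)⟩

/-- The prefix (extension) relation `α ⪯ β` on finite paths: `β = αγ` for some path `γ`. -/
def FP.le {G : DGraph} (p q : G.FP) : Prop :=
  ∃ (r : G.FP) (h : p.tgt = r.src), q = p.comp r h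

/-- A path homomorphism of graphs: a map on finite paths sending vertices to
vertices, intertwining the extended source and target maps, and preserving
concatenation of composable paths. -/
def IsPathHom {G H : DGraph} (f : G.FP → H.FP) : Prop :=
  (∀ v : G.V, ∃ w : H.V, f (FP.ofVertex v) = FP.ofVertex w) ∧
  (∀ p : G.FP, f (FP.ofVertex p.src) = FP.ofVertex (f p).src) ∧
  (∀ p : G.FP, f (FP.ofVertex p.tgt) = FP.ofVertex (f p).tgt) ∧
  (∀ (p q : G.FP) (h : p.tgt = q.src),
    ∃ h' : (f p).tgt = (f q).src, f (p.comp q h) = (f p).comp (f q) h')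

/-- A map on finite paths is vertex-injective if it is injective on vertices. -/
def VertexInjective {G H : DGraph} (f : G.FP → H.FP) : Prop :=
  Function.Injective (fun v : G.V => f (FP.ofVertex v))

/-- The monotonicity condition on edges: `f(e) ⪯ f(e′)` implies `e = e′`. -/
def EdgeMonotone {G H : DGraph} (f : G.FP → H.FP) : Prop :=
  ∀ e e' : G.E, FP.le (f (FP.ofEdge e)) (f (FP.ofEdge e')) → e = e'

end DGraph


/-! Under a path homomorphism, `f(e)` and `f(e′)` start at the same vertex. If they agreed at
every index below the smaller length, one would be a prefix of the other, hence `f(e) ⪯ f(e′)`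
or `f(e′) ⪯ f(e)`, and monotonicity would force `e = e′`. Positivity of both lengths is then
free, since the differing index lies below both. -/

theorem List.exists_getElem?_ne_of_not_prefix {α : Type*} {l₁ l₂ : List α}
    (h₁₂ : ¬l₁ <+: l₂) (h₂₁ : ¬l₂ <+: l₁) :
    ∃ i < min l₁.length l₂.length, l₁[i]? ≠ l₂[i]? := by
  by_contra! h
  rcases le_total l₁.length l₂.length with hle | hle
  · refine h₁₂ (List.prefix_iff_getElem?.2 fun i hi => ?_)
    rw [← h i (by omega), List.getElem?_eq_getElem hi]
  · refine h₂₁ (List.prefix_iff_getElem?.2 fun i hi => ?_)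
    rw [h i (by omega), List.getElem?_eq_getElem hi]

namespace DGraph

variable {G : DGraph}

theorem FP.ofVertex_injective : Function.Injective (FP.ofVertex : G.V → G.FP) :=
  fun _ _ h => congrArg FP.src h

theorem Path.exists_comp_heq_of_edges_prefix {a b : G.V} (P : G.Path a b) :
    ∀ {a' c : G.V} (Q : G.Path a' c), a = a' → P.edges <+: Q.edges →
      ∃ R : G.Path b c, HEq (P.comp R) Q := by
  induction P with
  | nil =>
    rintro _ _ Q rfl -
    exact ⟨Q, HEq.rfl⟩
  | cons e P ih =>
    rintro _ _ (_ | ⟨e₁, Q⟩) - hpre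
    · simp [Path.edges] at hpre
    · obtain ⟨rfl, hpre⟩ := List.cons_prefix_cons.1 hpre
      obtain ⟨R, hR⟩ := ih Q rfl hpre
      exact ⟨R, by rw [Path.comp, eq_of_heq hR]⟩

theorem FP.le_of_edges_prefix {p q : G.FP} (hsrc : p.src = q.src)
    (hpre : p.edges <+: q.edges) : p.le q := by
  obtain ⟨a, b, P⟩ := p
  obtain ⟨a', c, Q⟩ := q
  obtain ⟨R, hR⟩ := Path.exists_comp_heq_of_edges_prefix P Q hsrc hpre
  obtain rfl : a = a' := hsrc
  exact ⟨⟨b, c, R⟩, rfl, by rw [← eq_of_heq hR]; rfl⟩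

theorem IsPathHom.src_eq {H : DGraph} {f : G.FP → H.FP} (hf : IsPathHom f) {p q : G.FP}
    (hsrc : p.src = q.src) : (f p).src = (f q).src :=
  FP.ofVertex_injective <| by rw [← hf.2.1 p, ← hf.2.1 q, hsrc]

end DGraph

open DGraph in
theorem distinct_coinitial_edges_images_differ_general (G H : DGraph) (f : G.FP → H.FP)
    (hf : IsPathHom f) (hm : EdgeMonotone f)
    (e e' : G.E) (hne : e ≠ e') (hsrc : G.src e = G.src e') :
    0 < (f (FP.ofEdge e)).length ∧ 0 < (f (FP.ofEdge e')).length ∧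
    ∃ i, i < min (f (FP.ofEdge e)).length (f (FP.ofEdge e')).length ∧
      (f (FP.ofEdge e)).edges[i]? ≠ (f (FP.ofEdge e')).edges[i]? := by
  have hsrc' : (f (FP.ofEdge e)).src = (f (FP.ofEdge e')).src := hf.src_eq hsrc
  obtain ⟨i, hi, hi_ne⟩ := List.exists_getElem?_ne_of_not_prefix
    (fun hpre => hne (hm e e' (FP.le_of_edges_prefix hsrc' hpre)))
    (fun hpre => hne (hm e' e (FP.le_of_edges_prefix hsrc'.symm hpre)).symm)
  obtain ⟨hi_left, hi_right⟩ := lt_min_iff.1 hi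
  exact ⟨Nat.zero_lt_of_lt hi_left, Nat.zero_lt_of_lt hi_right, i, hi, hi_ne⟩

open DGraph in
/-- If `f` is a vertex-injective monotone path homomorphism and `e ≠ e′` are
distinct edges with the same source, then neither `f(e)` nor `f(e′)` is a
vertex (both have positive length) and there is an index
`i < min (len f(e)) (len f(e′))` at which the `i`-th edges of `f(e)` and
`f(e′)` differ. -/
theorem distinct_coinitial_edges_images_differ (G H : DGraph) (f : G.FP → H.FP)
    (hf : IsPathHom f) (hv : VertexInjective f) (hm : EdgeMonotone f)
    (e e' : G.E) (hne : e ≠ e') (hsrc : G.src e = G.src e') :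
    0 < (f (FP.ofEdge e)).length ∧ 0 < (f (FP.ofEdge e')).length ∧
    ∃ i, i < min (f (FP.ofEdge e)).length (f (FP.ofEdge e')).length ∧
      (f (FP.ofEdge e)).edges[i]? ≠ (f (FP.ofEdge e')).edges[i]? :=
  distinct_coinitial_edges_images_differ_general G H f hf hm e e' hne hsrc
end

section
/- Let f : FP(E) → FP(F) be a vertex-injective path homomorphism satisfying the monotonicity condition on edges. Then f_*^C : C_k(E) → C_k(F), defined on generators by [χ_p] ↦ [χ_{f̄(p)}] for p ∈ FP(Ē), is a well-defined k-algebra homomorphism between Cohn path algebras; the assignment is functorial, and it is unital when E, F have finitely many vertices and f is bijective on vertices. -/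
namespace DGraph

/-- The extended (double) graph `Ē` of `E`: same vertices, edges `E¹ ⊔ (E¹)*`,
with `s(e*) = t(e)` and `t(e*) = s(e)`. -/
def ext (G : DGraph) : DGraph where
  V := G.V
  E := G.E ⊕ G.E
  src := Sum.elim G.src G.tgt
  tgt := Sum.elim G.tgt G.src

/-- The canonical inclusion of paths of `E` into paths of the extended graph `Ē`. -/
def Path.inclExt {G : DGraph} : ∀ {v w : G.V}, G.Path v w → G.ext.Path v w
  | _, _, .nil v => Path.nil (G := G.ext) v
  | _, _, .cons e p => Path.cons (G := G.ext) (Sum.inl e) p.inclExt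

/-- The star (reversal) of a path of `E`, as a path of the extended graph `Ē`:
`(e₁…eₙ)* = eₙ*…e₁*`. -/
def Path.star {G : DGraph} : ∀ {v w : G.V}, G.Path v w → G.ext.Path w v
  | _, _, .nil v => Path.nil (G := G.ext) v
  | _, _, .cons e p =>
      Path.comp p.star (Path.cons (G := G.ext) (Sum.inr e) (Path.nil (G := G.ext) (G.src e)))

/-- The canonical inclusion `FP(E) → FP(Ē)`. -/
def FP.inclExt {G : DGraph} (p : G.FP) : G.ext.FP := ⟨p.1, p.2.1, p.2.2.inclExt⟩

/-- The star `p ↦ p*` of finite paths, `FP(E) → FP(Ē)`. -/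
def FP.star {G : DGraph} (p : G.FP) : G.ext.FP := ⟨p.2.1, p.1, p.2.2.star⟩

/-- `fbar` is the path homomorphism `Ē → F̄` of extended graphs induced by a
path homomorphism `f : E → F`: it is a path homomorphism agreeing with `f` on
vertices and satisfying `f̄(e) = f(e)` and `f̄(e*) = f(e)*` on the two kinds of
edges of `Ē`. -/
def IsBar {G H : DGraph} (f : G.FP → H.FP) (fbar : G.ext.FP → H.ext.FP) : Prop :=
  IsPathHom fbar ∧
  (∀ (v : G.V) (w : H.V), f (FP.ofVertex v) = FP.ofVertex w →
    fbar (FP.ofVertex (G := G.ext) v) = FP.ofVertex (G := H.ext) w) ∧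
  (∀ e : G.E, fbar (FP.ofEdge (G := G.ext) (Sum.inl e)) = FP.inclExt (f (FP.ofEdge e))) ∧
  (∀ e : G.E, fbar (FP.ofEdge (G := G.ext) (Sum.inr e)) = FP.star (f (FP.ofEdge e)))

end DGraph

namespace DGraph

/-- Generators of the Cohn/Leavitt path algebra of `G`: a generator `χ_v` for
each vertex, `χ_e` and `χ_{e*}` for each edge. -/
def Gen (G : DGraph) : Type := G.V ⊕ G.E ⊕ G.E

/-- The generator of the Cohn/Leavitt path algebra corresponding to an edge of
the extended graph `Ḡ`. -/
def genOfExtEdge {G : DGraph} (x : G.ext.E) : Gen G :=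
  Sum.elim (fun e => Sum.inr (Sum.inl e)) (fun e => Sum.inr (Sum.inr e)) x

/-- The relations defining the Cohn path algebra as a quotient of the free
algebra on the generators `χ_v, χ_e, χ_{e*}`: the path-algebra relations
`χ_v χ_w = δ_{v,w} χ_v`, `χ_{s(e)} χ_e = χ_e = χ_e χ_{t(e)}`,
`χ_{t(e)} χ_{e*} = χ_{e*} = χ_{e*} χ_{s(e)}`, together with the first
Cuntz–Krieger relation `χ_{e*} χ_f = δ_{e,f} χ_{t(e)}`. -/
inductive CohnRel (k : Type) [Field k] (G : DGraph) :
    FreeAlgebra k (Gen G) → FreeAlgebra k (Gen G) → Prop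
  | vtx (v w : G.V) [Decidable (v = w)] :
      CohnRel k G (FreeAlgebra.ι k (Sum.inl v) * FreeAlgebra.ι k (Sum.inl w))
        (if v = w then FreeAlgebra.ι k (Sum.inl v) else 0)
  | src_edge (e : G.E) :
      CohnRel k G (FreeAlgebra.ι k (Sum.inl (G.src e)) * FreeAlgebra.ι k (Sum.inr (Sum.inl e)))
        (FreeAlgebra.ι k (Sum.inr (Sum.inl e)))
  | edge_tgt (e : G.E) :
      CohnRel k G (FreeAlgebra.ι k (Sum.inr (Sum.inl e)) * FreeAlgebra.ι k (Sum.inl (G.tgt e)))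
        (FreeAlgebra.ι k (Sum.inr (Sum.inl e)))
  | tgt_star (e : G.E) :
      CohnRel k G (FreeAlgebra.ι k (Sum.inl (G.tgt e)) * FreeAlgebra.ι k (Sum.inr (Sum.inr e)))
        (FreeAlgebra.ι k (Sum.inr (Sum.inr e)))
  | star_src (e : G.E) :
      CohnRel k G (FreeAlgebra.ι k (Sum.inr (Sum.inr e)) * FreeAlgebra.ι k (Sum.inl (G.src e)))
        (FreeAlgebra.ι k (Sum.inr (Sum.inr e)))
  | cohn (e f : G.E) [Decidable (e = f)] :
      CohnRel k G (FreeAlgebra.ι k (Sum.inr (Sum.inr e)) * FreeAlgebra.ι k (Sum.inr (Sum.inl f)))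
        (if e = f then FreeAlgebra.ι k (Sum.inl (G.tgt e)) else 0)

/-- The Cohn path algebra `C_k(G)`. -/
def CohnAlg (k : Type) [Field k] (G : DGraph) : Type := RingQuot (CohnRel k G)

noncomputable instance (k : Type) [Field k] (G : DGraph) : Ring (CohnAlg k G) :=
  inferInstanceAs (Ring (RingQuot (CohnRel k G)))

noncomputable instance (k : Type) [Field k] (G : DGraph) : Algebra k (CohnAlg k G) :=
  inferInstanceAs (Algebra k (RingQuot (CohnRel k G)))

/-- The element of the free algebra on the generators given by a finite path of
the extended graph: `χ_v` for the length-zero path at `v`, and the product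
`χ_{x₁} ⋯ χ_{xₙ}` for a path `x₁…xₙ` of positive length. -/
noncomputable def freeOfFP (k : Type) [Field k] {G : DGraph} (p : G.ext.FP) :
    FreeAlgebra k (Gen G) :=
  if p.edges.isEmpty then FreeAlgebra.ι k (Sum.inl (p.src : G.V))
  else (p.edges.map fun x => FreeAlgebra.ι k (genOfExtEdge x)).prod

/-- The class `[χ_p]` in the Cohn path algebra of a finite path `p` of the
extended graph. -/
noncomputable def cohnPathElem (k : Type) [Field k] {G : DGraph} (p : G.ext.FP) :
    CohnAlg k G :=
  RingQuot.mkAlgHom k (CohnRel k G) (freeOfFP k p)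

end DGraph

/-!
The induced map sends a generator `χ_x` (`x` a vertex, edge or ghost edge of `Ē`) to the class
of the path `f̄(x)`, and this respects the relations of `C_k(E)`: the path-algebra relations
because `f̄` preserves concatenation and `[χ_{pq}] = [χ_p][χ_q]` in `C_k(F)`; orthogonality of
distinct vertices by vertex-injectivity; and the Cohn relation `χ_{e*}χ_{e'} = δ_{e,e'}χ_{t(e)}`
because in `C_k(F)` one has `[χ_{p*}][χ_p] = [χ_{t(p)}]`, while `[χ_{p*}][χ_q] = 0` whenever
neither of `p`, `q` is a prefix of the other, which monotonicity guarantees for `p = f(e)`,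
`q = f(e′)`, `e ≠ e′`. Multiplicativity then gives `[χ_p] ↦ [χ_{f̄(p)}]` for every path,
uniqueness holds because the generators are path classes, functoriality is immediate, and
unitality is a reindexing of the vertex sum along the bijection induced by `f` on vertices.
-/

namespace DGraph

open FreeAlgebra

section Paths

variable {G : DGraph}

def Path.toFP {a b : G.V} (p : G.Path a b) : G.FP := ⟨a, b, p⟩

lemma FP.ofVertex_injective_s12 : Function.Injective (FP.ofVertex (G := G)) :=
  fun _ _ h => congrArg Sigma.fst h

lemma FP.nil_le {a b : G.V} (q : G.Path a b) : FP.le (Path.nil a).toFP q.toFP :=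
  ⟨q.toFP, rfl, rfl⟩

lemma FP.cons_le_cons (e : G.E) {b b' : G.V} {p : G.Path (G.tgt e) b}
    {q : G.Path (G.tgt e) b'} (h : FP.le p.toFP q.toFP) :
    FP.le (Path.cons e p).toFP (Path.cons e q).toFP := by
  obtain ⟨r, hr, hq⟩ := h
  refine ⟨r, hr, ?_⟩
  exact congrArg (fun s : Σ w, G.Path (G.tgt e) w => (⟨G.src e, s.1, .cons e s.2⟩ : G.FP))
    (eq_of_heq (Sigma.mk.inj hq).2)

def Gen.toFP : Gen G → G.ext.FP
  | .inl v => FP.ofVertex (G := G.ext) v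
  | .inr x => FP.ofEdge (G := G.ext) x

end Paths

section CohnAlgebra

/- `H.ext.V`, `H.ext.E`, `Gen H` and `CohnAlg k H` are semireducible aliases of `H.V`,
`H.E ⊕ H.E`, a sum type and a `RingQuot`, so some rewrites below need `erw` or go through
`exact`. -/

variable {k : Type} [Field k] {H : DGraph}

variable (k H) in
noncomputable def CohnAlg.mkAlgHom : FreeAlgebra k (Gen H) →ₐ[k] CohnAlg k H :=
  RingQuot.mkAlgHom k (CohnRel k H)

lemma CohnAlg.mkAlgHom_rel {x y : FreeAlgebra k (Gen H)} (h : CohnRel k H x y) :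
    CohnAlg.mkAlgHom k H x = CohnAlg.mkAlgHom k H y :=
  RingQuot.mkAlgHom_rel k h

lemma cohnPathElem_eq (p : H.ext.FP) :
    cohnPathElem k p = CohnAlg.mkAlgHom k H (freeOfFP k p) := rfl

lemma freeOfFP_of_edges_eq_nil {p : H.ext.FP} (h : p.edges = []) :
    freeOfFP k p = ι k (.inl p.src) := by
  simp [freeOfFP, h]

lemma freeOfFP_of_edges_ne_nil {p : H.ext.FP} (h : p.edges ≠ []) :
    freeOfFP k p = (p.edges.map fun x => ι k (genOfExtEdge x)).prod := by
  simp [freeOfFP, h]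

lemma cohnPathElem_ofVertex (v : H.ext.V) :
    cohnPathElem k (FP.ofVertex v) = CohnAlg.mkAlgHom k H (ι k (.inl v)) := rfl

lemma cohnPathElem_ofEdge (x : H.ext.E) :
    cohnPathElem k (FP.ofEdge x) = CohnAlg.mkAlgHom k H (ι k (genOfExtEdge x)) := by
  have hedges : (FP.ofEdge x).edges = [x] := rfl
  rw [cohnPathElem_eq, freeOfFP_of_edges_ne_nil (hedges ▸ List.cons_ne_nil _ _), hedges,
    List.map_singleton, List.prod_singleton]

lemma cohnPathElem_ofVertex_mul_ofVertex (v w : H.V) [Decidable (v = w)] :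
    cohnPathElem k (FP.ofVertex (G := H.ext) v) * cohnPathElem k (FP.ofVertex (G := H.ext) w) =
      if v = w then cohnPathElem k (FP.ofVertex (G := H.ext) v) else 0 := by
  erw [cohnPathElem_ofVertex, cohnPathElem_ofVertex, ← map_mul,
    CohnAlg.mkAlgHom_rel (CohnRel.vtx v w), apply_ite (CohnAlg.mkAlgHom k H), map_zero]

lemma cohnPathElem_ofVertex_src_mul_ofEdge (x : H.ext.E) :
    cohnPathElem k (FP.ofVertex (H.ext.src x)) * cohnPathElem k (FP.ofEdge x) =
      cohnPathElem k (FP.ofEdge x) := by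
  rw [cohnPathElem_ofEdge, cohnPathElem_ofVertex, ← map_mul]
  rcases x with e | e
  exacts [CohnAlg.mkAlgHom_rel (CohnRel.src_edge e), CohnAlg.mkAlgHom_rel (CohnRel.tgt_star e)]

lemma cohnPathElem_ofEdge_mul_ofVertex_tgt (x : H.ext.E) :
    cohnPathElem k (FP.ofEdge x) * cohnPathElem k (FP.ofVertex (H.ext.tgt x)) =
      cohnPathElem k (FP.ofEdge x) := by
  rw [cohnPathElem_ofEdge, cohnPathElem_ofVertex, ← map_mul]
  rcases x with e | e
  exacts [CohnAlg.mkAlgHom_rel (CohnRel.edge_tgt e), CohnAlg.mkAlgHom_rel (CohnRel.star_src e)]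

lemma cohnPathElem_ofEdge_star_mul_ofEdge (e e' : H.E) [Decidable (e = e')] :
    cohnPathElem k (FP.ofEdge (G := H.ext) (.inr e)) *
        cohnPathElem k (FP.ofEdge (G := H.ext) (.inl e')) =
      if e = e' then cohnPathElem k (FP.ofVertex (G := H.ext) (H.tgt e)) else 0 := by
  erw [cohnPathElem_ofEdge, cohnPathElem_ofEdge, ← map_mul,
    CohnAlg.mkAlgHom_rel (CohnRel.cohn e e'), apply_ite (CohnAlg.mkAlgHom k H), map_zero]
  rfl

lemma cohnPathElem_cons (x : H.ext.E) {b : H.ext.V} (q : H.ext.Path (H.ext.tgt x) b) :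
    cohnPathElem k (Path.cons x q).toFP = cohnPathElem k (FP.ofEdge x) * cohnPathElem k q.toFP := by
  -- `freeOfFP` sends a length-zero path to `χ_v`, not to the empty product `1`; the relation
  -- `χ_x χ_{t(x)} = χ_x` absorbs the difference.
  have hedges : (Path.cons x q).toFP.edges = x :: q.toFP.edges := rfl
  rw [cohnPathElem_eq, freeOfFP_of_edges_ne_nil (hedges ▸ List.cons_ne_nil _ _), hedges,
    List.map_cons, List.prod_cons, map_mul, ← cohnPathElem_ofEdge, cohnPathElem_eq q.toFP]
  by_cases h : q.toFP.edges = []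
  · rw [h, List.map_nil, List.prod_nil, map_one, mul_one, freeOfFP_of_edges_eq_nil h]
    exact (cohnPathElem_ofEdge_mul_ofVertex_tgt x).symm
  · rw [freeOfFP_of_edges_ne_nil h]

lemma cohnPathElem_ofVertex_mul {a b : H.ext.V} (p : H.ext.Path a b) :
    cohnPathElem k (FP.ofVertex a) * cohnPathElem k p.toFP = cohnPathElem k p.toFP := by
  classical
  cases p with
  | nil => exact (cohnPathElem_ofVertex_mul_ofVertex (k := k) (H := H) a a).trans (if_pos rfl)
  | cons x q => rw [cohnPathElem_cons, ← mul_assoc, cohnPathElem_ofVertex_src_mul_ofEdge]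

lemma cohnPathElem_mul_ofVertex {a b : H.ext.V} (p : H.ext.Path a b) :
    cohnPathElem k p.toFP * cohnPathElem k (FP.ofVertex b) = cohnPathElem k p.toFP := by
  classical
  induction p with
  | nil => exact (cohnPathElem_ofVertex_mul_ofVertex (k := k) (H := H) _ _).trans (if_pos rfl)
  | cons x q ih => rw [cohnPathElem_cons, mul_assoc, ih]

lemma cohnPathElem_pathComp {a b c : H.ext.V} (p : H.ext.Path a b) (q : H.ext.Path b c) :
    cohnPathElem k (p.comp q).toFP = cohnPathElem k p.toFP * cohnPathElem k q.toFP := by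
  induction p with
  | nil => exact (cohnPathElem_ofVertex_mul q).symm
  | cons x p ih => rw [Path.comp, cohnPathElem_cons, ih, cohnPathElem_cons, mul_assoc]

lemma cohnPathElem_comp (p q : H.ext.FP) (h : p.tgt = q.src) :
    cohnPathElem k (p.comp q h) = cohnPathElem k p * cohnPathElem k q := by
  obtain ⟨a, b, p⟩ := p
  obtain ⟨b', c, q⟩ := q
  cases h
  exact cohnPathElem_pathComp p q

lemma cohnPathElem_mul_eq_zero_of_ne {a b a' b' : H.V} (p : H.ext.Path a b)
    (q : H.ext.Path a' b') (h : b ≠ a') :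
    cohnPathElem k p.toFP * cohnPathElem k q.toFP = 0 := by
  classical
  rw [← cohnPathElem_mul_ofVertex p, ← cohnPathElem_ofVertex_mul q, mul_assoc,
    ← mul_assoc (cohnPathElem k (FP.ofVertex b)), cohnPathElem_ofVertex_mul_ofVertex, if_neg h,
    zero_mul, mul_zero]

lemma cohnPathElem_star_cons_mul_inclExt_cons (e e' : H.E) {b b' : H.V}
    (p : H.Path (H.tgt e) b) (q : H.Path (H.tgt e') b') [Decidable (e = e')] :
    cohnPathElem k (Path.cons e p).star.toFP * cohnPathElem k (Path.cons e' q).inclExt.toFP =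
      if e = e' then cohnPathElem k p.star.toFP * cohnPathElem k q.inclExt.toFP else 0 := by
  calc _ = cohnPathElem k p.star.toFP * (cohnPathElem k (FP.ofEdge (G := H.ext) (.inr e)) *
        cohnPathElem k (FP.ofEdge (G := H.ext) (.inl e'))) * cohnPathElem k q.inclExt.toFP := by
        rw [Path.star.eq_2, Path.inclExt.eq_2]
        erw [cohnPathElem_pathComp, cohnPathElem_cons (.inl e')]
        simp only [mul_assoc]
        rfl
    _ = _ := by
      rw [cohnPathElem_ofEdge_star_mul_ofEdge]
      split_ifs with h
      · subst h
        erw [cohnPathElem_mul_ofVertex]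
      · rw [mul_zero, zero_mul]

lemma cohnPathElem_gen_toFP (g : Gen H) :
    cohnPathElem k g.toFP = CohnAlg.mkAlgHom k H (ι k g) := by
  rcases g with v | x
  · rfl
  · exact (cohnPathElem_ofEdge x).trans (by rcases x with e | e <;> rfl)

lemma cohnPathElem_star_mul_inclExt (p : H.FP) :
    cohnPathElem k p.star * cohnPathElem k p.inclExt =
      cohnPathElem k (FP.ofVertex (G := H.ext) p.tgt) := by
  classical
  obtain ⟨a, b, p⟩ := p
  induction p with
  | nil v => exact (cohnPathElem_ofVertex_mul_ofVertex v v).trans (if_pos rfl)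
  | cons e p ih =>
    exact (cohnPathElem_star_cons_mul_inclExt_cons e e p p).trans ((if_pos rfl).trans ih)

lemma cohnPathElem_star_mul_inclExt_eq_zero (p q : H.FP) (hpq : ¬ p.le q) (hqp : ¬ q.le p) :
    cohnPathElem k p.star * cohnPathElem k q.inclExt = 0 := by
  classical
  obtain ⟨a, b, p⟩ := p
  induction p generalizing q with
  | nil v =>
    obtain ⟨a', b', q⟩ := q
    by_cases h : v = a'
    · subst h
      exact absurd (FP.nil_le q) hpq
    · exact cohnPathElem_mul_eq_zero_of_ne (Path.nil v).star q.inclExt h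
  | cons e p ih =>
    obtain ⟨a', b', q⟩ := q
    cases q with
    | nil =>
      by_cases h : H.src e = a'
      · subst h
        exact absurd (FP.nil_le _) hqp
      · exact cohnPathElem_mul_eq_zero_of_ne (Path.cons e p).star (Path.nil a').inclExt h
    | cons e' q =>
      refine (cohnPathElem_star_cons_mul_inclExt_cons e e' p q).trans ?_
      split_ifs with h
      · subst h
        exact ih q.toFP (fun hle => hpq (FP.cons_le_cons e hle))
          (fun hle => hqp (FP.cons_le_cons e hle))
      · rfl

end CohnAlgebra

section InducedHom

variable {k : Type} [Field k] {G H : DGraph}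

lemma IsPathHom.cohnPathElem_map_comp {fbar : G.ext.FP → H.ext.FP} (hfbar : IsPathHom fbar)
    (p q : G.ext.FP) (h : p.tgt = q.src) :
    cohnPathElem k (fbar (p.comp q h)) = cohnPathElem k (fbar p) * cohnPathElem k (fbar q) := by
  obtain ⟨_, hcomp⟩ := hfbar.2.2.2 p q h
  rw [hcomp, cohnPathElem_comp]

lemma cohnPathElem_map_ofVertex_mul_of_ne {f : G.FP → H.FP} {fbar : G.ext.FP → H.ext.FP}
    (hf : IsPathHom f) (hvi : VertexInjective f) (hfb : IsBar f fbar) {v w : G.V} (h : v ≠ w) :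
    cohnPathElem k (fbar (FP.ofVertex (G := G.ext) v)) *
      cohnPathElem k (fbar (FP.ofVertex (G := G.ext) w)) = 0 := by
  obtain ⟨v', hv'⟩ := hf.1 v
  obtain ⟨w', hw'⟩ := hf.1 w
  rw [hfb.2.1 v v' hv', hfb.2.1 w w' hw']
  refine cohnPathElem_mul_eq_zero_of_ne (Path.nil (G := H.ext) v') (Path.nil (G := H.ext) w') ?_
  rintro rfl
  exact h (hvi (hv'.trans hw'.symm))

lemma lift_cohnPathElem_map_eq_of_cohnRel {f : G.FP → H.FP} {fbar : G.ext.FP → H.ext.FP}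
    (hf : IsPathHom f) (hvi : VertexInjective f) (hmono : EdgeMonotone f) (hfb : IsBar f fbar)
    {x y : FreeAlgebra k (Gen G)} (hxy : CohnRel k G x y) :
    lift k (fun g => cohnPathElem k (fbar g.toFP)) x =
      lift k (fun g => cohnPathElem k (fbar g.toFP)) y := by
  have hcomp := hfb.1.cohnPathElem_map_comp (k := k)
  cases hxy with
  | vtx v w =>
    erw [map_mul, lift_ι_apply, lift_ι_apply, apply_ite (lift k _), map_zero, lift_ι_apply]
    split_ifs with h
    · subst h
      exact (hcomp _ _ rfl).symm
    · exact cohnPathElem_map_ofVertex_mul_of_ne hf hvi hfb h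
  | src_edge e =>
    erw [map_mul, lift_ι_apply, lift_ι_apply]
    exact (hcomp _ (FP.ofEdge (G := G.ext) (.inl e)) rfl).symm
  | edge_tgt e =>
    erw [map_mul, lift_ι_apply, lift_ι_apply]
    exact (hcomp (FP.ofEdge (G := G.ext) (.inl e)) _ rfl).symm
  | tgt_star e =>
    erw [map_mul, lift_ι_apply, lift_ι_apply]
    exact (hcomp _ (FP.ofEdge (G := G.ext) (.inr e)) rfl).symm
  | star_src e =>
    erw [map_mul, lift_ι_apply, lift_ι_apply]
    exact (hcomp (FP.ofEdge (G := G.ext) (.inr e)) _ rfl).symm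
  | cohn e e' =>
    erw [map_mul, lift_ι_apply, lift_ι_apply, apply_ite (lift k _), map_zero, lift_ι_apply,
      hfb.2.2.2 e, hfb.2.2.1 e']
    split_ifs with h
    · subst h
      have htgt := hfb.1.2.2.1 (FP.ofEdge (G := G.ext) (.inl e))
      rw [hfb.2.2.1 e] at htgt
      erw [cohnPathElem_star_mul_inclExt, htgt]
      rfl
    · exact cohnPathElem_star_mul_inclExt_eq_zero _ _ (fun hle => h (hmono e e' hle))
        (fun hle => h (hmono e' e hle).symm)

variable (k) in
noncomputable def cohnMap {f : G.FP → H.FP} {fbar : G.ext.FP → H.ext.FP}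
    (hf : IsPathHom f) (hvi : VertexInjective f) (hmono : EdgeMonotone f) (hfb : IsBar f fbar) :
    CohnAlg k G →ₐ[k] CohnAlg k H :=
  RingQuot.liftAlgHom k ⟨lift k (fun g => cohnPathElem k (fbar g.toFP)),
    fun _ _ => lift_cohnPathElem_map_eq_of_cohnRel hf hvi hmono hfb⟩

lemma cohnMap_cohnPathElem {f : G.FP → H.FP} {fbar : G.ext.FP → H.ext.FP}
    (hf : IsPathHom f) (hvi : VertexInjective f) (hmono : EdgeMonotone f) (hfb : IsBar f fbar)
    (p : G.ext.FP) : cohnMap k hf hvi hmono hfb (cohnPathElem k p) = cohnPathElem k (fbar p) := by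
  have hgen (g : Gen G) :
      cohnMap k hf hvi hmono hfb (cohnPathElem k g.toFP) = cohnPathElem k (fbar g.toFP) := by
    rw [cohnPathElem_gen_toFP]
    exact (RingQuot.liftAlgHom_mkAlgHom_apply k _ _ (ι k g)).trans (lift_ι_apply _ _)
  obtain ⟨a, b, p⟩ := p
  change cohnMap k hf hvi hmono hfb (cohnPathElem k p.toFP) = cohnPathElem k (fbar p.toFP)
  induction p with
  | nil v => exact hgen (.inl v)
  | cons x q ih =>
    refine (congrArg _ (cohnPathElem_cons x q)).trans ?_
    rw [map_mul, ih]
    exact (congrArg (· * _) (hgen (.inr x))).trans (hfb.1.cohnPathElem_map_comp _ q.toFP rfl).symm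

lemma CohnAlg.algHom_ext {A : Type} [Semiring A] [Algebra k A] {φ ψ : CohnAlg k G →ₐ[k] A}
    (h : ∀ g : Gen G, φ (cohnPathElem k g.toFP) = ψ (cohnPathElem k g.toFP)) : φ = ψ := by
  refine RingQuot.ringQuot_ext' k φ ψ (FreeAlgebra.hom_ext (funext fun g => ?_))
  have := h g
  rwa [cohnPathElem_gen_toFP] at this

lemma map_sum_cohnPathElem_ofVertex [Fintype G.V] [Fintype H.V] {f : G.FP → H.FP}
    {fbar : G.ext.FP → H.ext.FP} (hf : IsPathHom f) (hvi : VertexInjective f) (hfb : IsBar f fbar)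
    (hsurj : ∀ w : H.V, ∃ v : G.V, f (FP.ofVertex v) = FP.ofVertex w)
    (φ : CohnAlg k G →ₐ[k] CohnAlg k H)
    (hφ : ∀ p : G.ext.FP, φ (cohnPathElem k p) = cohnPathElem k (fbar p)) :
    φ (∑ v : G.V, cohnPathElem k (FP.ofVertex (G := G.ext) v)) =
      ∑ w : H.V, cohnPathElem k (FP.ofVertex (G := H.ext) w) := by
  choose vmap hvmap using hf.1
  have hbij : Function.Bijective vmap :=
    ⟨fun v v' h => hvi ((hvmap v).trans (h ▸ (hvmap v').symm)),
      fun w => (hsurj w).imp fun v hv => FP.ofVertex_injective_s12 ((hvmap v).symm.trans hv)⟩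
  rw [map_sum]
  exact Fintype.sum_bijective vmap hbij _ _ fun v => by rw [hφ, hfb.2.1 v _ (hvmap v)]

end InducedHom

end DGraph

open DGraph in
/-- The Cohn path algebra construction is covariantly functorial on graphs and
vertex-injective path homomorphisms satisfying the monotonicity condition:
`f_*^C : C_k(E) → C_k(F)`, determined by `[χ_p] ↦ [χ_{f̄(p)}]` for
`p ∈ FP(Ē)`, is a well-defined (unique) algebra homomorphism; the assignment is
functorial; and it is unital (sends the sum of vertex idempotents to the sum of
vertex idempotents) when the graphs have finitely many vertices and `f` is
bijective on vertices. -/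
theorem cohn_algebra_functor (k : Type) [Field k] :
    (∀ (G H : DGraph) (f : G.FP → H.FP) (fbar : G.ext.FP → H.ext.FP),
      IsPathHom f → VertexInjective f → EdgeMonotone f → IsBar f fbar →
      ∃! φ : CohnAlg k G →ₐ[k] CohnAlg k H,
        ∀ p : G.ext.FP, φ (cohnPathElem k p) = cohnPathElem k (fbar p)) ∧
    (∀ (G H K : DGraph) (f : G.FP → H.FP) (g : H.FP → K.FP)
      (fbar : G.ext.FP → H.ext.FP) (gbar : H.ext.FP → K.ext.FP)
      (φf : CohnAlg k G →ₐ[k] CohnAlg k H) (φg : CohnAlg k H →ₐ[k] CohnAlg k K),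
      IsPathHom f → VertexInjective f → EdgeMonotone f → IsBar f fbar →
      IsPathHom g → VertexInjective g → EdgeMonotone g → IsBar g gbar →
      (∀ p : G.ext.FP, φf (cohnPathElem k p) = cohnPathElem k (fbar p)) →
      (∀ p : H.ext.FP, φg (cohnPathElem k p) = cohnPathElem k (gbar p)) →
      ∀ p : G.ext.FP, (φg.comp φf) (cohnPathElem k p) = cohnPathElem k (gbar (fbar p))) ∧
    (∀ (G H : DGraph), ∀ [Fintype G.V] [Fintype H.V],
      ∀ (f : G.FP → H.FP) (fbar : G.ext.FP → H.ext.FP),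
      IsPathHom f → VertexInjective f → EdgeMonotone f → IsBar f fbar →
      (∀ w : H.V, ∃ v : G.V, f (FP.ofVertex v) = FP.ofVertex w) →
      ∀ φ : CohnAlg k G →ₐ[k] CohnAlg k H,
        (∀ p : G.ext.FP, φ (cohnPathElem k p) = cohnPathElem k (fbar p)) →
        φ (∑ v : G.V, cohnPathElem k (FP.ofVertex (G := G.ext) v)) =
          ∑ w : H.V, cohnPathElem k (FP.ofVertex (G := H.ext) w)) := by
  refine ⟨?_, ?_, ?_⟩
  · intro G H f fbar hf hvi hmono hfb
    refine ⟨cohnMap k hf hvi hmono hfb, cohnMap_cohnPathElem hf hvi hmono hfb, fun φ hφ => ?_⟩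
    exact CohnAlg.algHom_ext fun g => by rw [hφ, cohnMap_cohnPathElem]
  · intro G H K f g fbar gbar φf φg _ _ _ _ _ _ _ _ hφf hφg p
    rw [AlgHom.comp_apply, hφf, hφg]
  · intro G H _ _ f fbar hf hvi _ hfb hsurj φ hφ
    exact map_sum_cohnPathElem_ofVertex hf hvi hfb hsurj φ hφ
end

section
/- Let E be the graph with one vertex v and two loops e₁, e₂, and F the graph with one vertex and one loop e. The path homomorphism f with f(e₂) = e and f(e₁) = e² is injective on edges and on vertices, but the prescription [χ_p] ↦ [χ_{f̄(p)}] does not define an algebra homomorphism C_k(E) → C_k(F) of Cohn path algebras: it would send the zero element [χ_{e₂*}][χ_{e₁}] = 0 to [χ_{e*}][χ_{e²}] = [χ_e] ≠ 0. -/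
/-- A directed graph. -/
structure CGraph where
  V : Type
  E : Type
  src : E → V
  tgt : E → V

namespace CGraph

/-- Finite paths from `v` to `w` in a graph. -/
inductive Path (G : CGraph) : G.V → G.V → Type
  | nil (v : G.V) : Path G v v
  | cons (e : G.E) {w : G.V} (p : Path G (G.tgt e) w) : Path G (G.src e) w

/-- Concatenation of composable indexed paths. -/
def Path.comp {G : CGraph} : ∀ {a b c : G.V}, G.Path a b → G.Path b c → G.Path a c
  | _, _, _, .nil _, q => q
  | _, _, _, .cons e p, q => .cons e (p.comp q)

/-- The list of edges of a path. -/
def Path.edges {G : CGraph} : ∀ {a b : G.V}, G.Path a b → List G.E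
  | _, _, .nil _ => []
  | _, _, .cons e p => e :: p.edges

/-- The set of all finite paths of a graph (with arbitrary endpoints). -/
def FP (G : CGraph) : Type := Σ (v : G.V) (w : G.V), G.Path v w

/-- The source (beginning) of a finite path. -/
def FP.src {G : CGraph} (p : G.FP) : G.V := p.1

/-- The target (end) of a finite path. -/
def FP.tgt {G : CGraph} (p : G.FP) : G.V := p.2.1

/-- The list of edges of a finite path. -/
def FP.edges {G : CGraph} (p : G.FP) : List G.E := p.2.2.edges

/-- The length of a finite path. -/
def FP.length {G : CGraph} (p : G.FP) : ℕ := p.edges.length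

/-- A vertex, viewed as a length-zero finite path. -/
def FP.ofVertex {G : CGraph} (v : G.V) : G.FP := ⟨v, v, .nil v⟩

/-- An edge, viewed as a length-one finite path. -/
def FP.ofEdge {G : CGraph} (e : G.E) : G.FP :=
  ⟨G.src e, G.tgt e, .cons e (.nil (G.tgt e))⟩

/-- Concatenation of composable finite paths. -/
def FP.comp {G : CGraph} (p q : G.FP) (h : p.tgt = q.src) : G.FP :=
  ⟨p.1, q.2.1, p.2.2.comp (cast (congrArg (fun x => G.Path x q.2.1) h.symm) q.2.2)⟩

/-- The prefix (extension) relation `α ⪯ β` on finite paths: `β = αγ` for some path `γ`. -/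
def FP.le {G : CGraph} (p q : G.FP) : Prop :=
  ∃ (r : G.FP) (h : p.tgt = r.src), q = p.comp r h

/-- A path homomorphism of graphs: a map on finite paths sending vertices to
vertices, intertwining the extended source and target maps, and preserving
concatenation of composable paths. -/
def IsPathHom {G H : CGraph} (f : G.FP → H.FP) : Prop :=
  (∀ v : G.V, ∃ w : H.V, f (FP.ofVertex v) = FP.ofVertex w) ∧
  (∀ p : G.FP, f (FP.ofVertex p.src) = FP.ofVertex (f p).src) ∧
  (∀ p : G.FP, f (FP.ofVertex p.tgt) = FP.ofVertex (f p).tgt) ∧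
  (∀ (p q : G.FP) (h : p.tgt = q.src),
    ∃ h' : (f p).tgt = (f q).src, f (p.comp q h) = (f p).comp (f q) h')

/-- A map on finite paths is vertex-injective if it is injective on vertices. -/
def VertexInjective {G H : CGraph} (f : G.FP → H.FP) : Prop :=
  Function.Injective (fun v : G.V => f (FP.ofVertex v))

/-- The monotonicity condition on edges: `f(e) ⪯ f(e′)` implies `e = e′`. -/
def EdgeMonotone {G H : CGraph} (f : G.FP → H.FP) : Prop :=
  ∀ e e' : G.E, FP.le (f (FP.ofEdge e)) (f (FP.ofEdge e')) → e = e'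

end CGraph

namespace CGraph

/-- The extended (double) graph `Ē` of `E`: same vertices, edges `E¹ ⊔ (E¹)*`,
with `s(e*) = t(e)` and `t(e*) = s(e)`. -/
def ext (G : CGraph) : CGraph where
  V := G.V
  E := G.E ⊕ G.E
  src := Sum.elim G.src G.tgt
  tgt := Sum.elim G.tgt G.src

/-- The canonical inclusion of paths of `E` into paths of the extended graph `Ē`. -/
def Path.inclExt {G : CGraph} : ∀ {v w : G.V}, G.Path v w → G.ext.Path v w
  | _, _, .nil v => Path.nil (G := G.ext) v
  | _, _, .cons e p => Path.cons (G := G.ext) (Sum.inl e) p.inclExt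

/-- The star (reversal) of a path of `E`, as a path of the extended graph `Ē`:
`(e₁…eₙ)* = eₙ*…e₁*`. -/
def Path.star {G : CGraph} : ∀ {v w : G.V}, G.Path v w → G.ext.Path w v
  | _, _, .nil v => Path.nil (G := G.ext) v
  | _, _, .cons e p =>
      Path.comp p.star (Path.cons (G := G.ext) (Sum.inr e) (Path.nil (G := G.ext) (G.src e)))

/-- The canonical inclusion `FP(E) → FP(Ē)`. -/
def FP.inclExt {G : CGraph} (p : G.FP) : G.ext.FP := ⟨p.1, p.2.1, p.2.2.inclExt⟩

/-- The star `p ↦ p*` of finite paths, `FP(E) → FP(Ē)`. -/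
def FP.star {G : CGraph} (p : G.FP) : G.ext.FP := ⟨p.2.1, p.1, p.2.2.star⟩

/-- `fbar` is the path homomorphism `Ē → F̄` of extended graphs induced by a
path homomorphism `f : E → F`: it is a path homomorphism agreeing with `f` on
vertices and satisfying `f̄(e) = f(e)` and `f̄(e*) = f(e)*` on the two kinds of
edges of `Ē`. -/
def IsBar {G H : CGraph} (f : G.FP → H.FP) (fbar : G.ext.FP → H.ext.FP) : Prop :=
  IsPathHom fbar ∧
  (∀ (v : G.V) (w : H.V), f (FP.ofVertex v) = FP.ofVertex w →
    fbar (FP.ofVertex (G := G.ext) v) = FP.ofVertex (G := H.ext) w) ∧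
  (∀ e : G.E, fbar (FP.ofEdge (G := G.ext) (Sum.inl e)) = FP.inclExt (f (FP.ofEdge e))) ∧
  (∀ e : G.E, fbar (FP.ofEdge (G := G.ext) (Sum.inr e)) = FP.star (f (FP.ofEdge e)))

end CGraph

namespace CGraph

/-- Generators of the Cohn/Leavitt path algebra of `G`: a generator `χ_v` for
each vertex, `χ_e` and `χ_{e*}` for each edge. -/
def Gen (G : CGraph) : Type := G.V ⊕ G.E ⊕ G.E

/-- The generator of the Cohn/Leavitt path algebra corresponding to an edge of
the extended graph `Ḡ`. -/
def genOfExtEdge {G : CGraph} (x : G.ext.E) : Gen G :=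
  Sum.elim (fun e => Sum.inr (Sum.inl e)) (fun e => Sum.inr (Sum.inr e)) x

/-- The relations defining the Cohn path algebra as a quotient of the free
algebra on the generators `χ_v, χ_e, χ_{e*}`: the path-algebra relations
`χ_v χ_w = δ_{v,w} χ_v`, `χ_{s(e)} χ_e = χ_e = χ_e χ_{t(e)}`,
`χ_{t(e)} χ_{e*} = χ_{e*} = χ_{e*} χ_{s(e)}`, together with the first
Cuntz–Krieger relation `χ_{e*} χ_f = δ_{e,f} χ_{t(e)}`. -/
inductive CohnRel (k : Type) [Field k] (G : CGraph) :
    FreeAlgebra k (Gen G) → FreeAlgebra k (Gen G) → Prop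
  | vtx (v w : G.V) [Decidable (v = w)] :
      CohnRel k G (FreeAlgebra.ι k (Sum.inl v) * FreeAlgebra.ι k (Sum.inl w))
        (if v = w then FreeAlgebra.ι k (Sum.inl v) else 0)
  | src_edge (e : G.E) :
      CohnRel k G (FreeAlgebra.ι k (Sum.inl (G.src e)) * FreeAlgebra.ι k (Sum.inr (Sum.inl e)))
        (FreeAlgebra.ι k (Sum.inr (Sum.inl e)))
  | edge_tgt (e : G.E) :
      CohnRel k G (FreeAlgebra.ι k (Sum.inr (Sum.inl e)) * FreeAlgebra.ι k (Sum.inl (G.tgt e)))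
        (FreeAlgebra.ι k (Sum.inr (Sum.inl e)))
  | tgt_star (e : G.E) :
      CohnRel k G (FreeAlgebra.ι k (Sum.inl (G.tgt e)) * FreeAlgebra.ι k (Sum.inr (Sum.inr e)))
        (FreeAlgebra.ι k (Sum.inr (Sum.inr e)))
  | star_src (e : G.E) :
      CohnRel k G (FreeAlgebra.ι k (Sum.inr (Sum.inr e)) * FreeAlgebra.ι k (Sum.inl (G.src e)))
        (FreeAlgebra.ι k (Sum.inr (Sum.inr e)))
  | cohn (e f : G.E) [Decidable (e = f)] :
      CohnRel k G (FreeAlgebra.ι k (Sum.inr (Sum.inr e)) * FreeAlgebra.ι k (Sum.inr (Sum.inl f)))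
        (if e = f then FreeAlgebra.ι k (Sum.inl (G.tgt e)) else 0)

/-- The Cohn path algebra `C_k(G)`. -/
def CohnAlg (k : Type) [Field k] (G : CGraph) : Type := RingQuot (CohnRel k G)

noncomputable instance (k : Type) [Field k] (G : CGraph) : Ring (CohnAlg k G) :=
  inferInstanceAs (Ring (RingQuot (CohnRel k G)))

noncomputable instance (k : Type) [Field k] (G : CGraph) : Algebra k (CohnAlg k G) :=
  inferInstanceAs (Algebra k (RingQuot (CohnRel k G)))

/-- The element of the free algebra on the generators given by a finite path of
the extended graph: `χ_v` for the length-zero path at `v`, and the product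
`χ_{x₁} ⋯ χ_{xₙ}` for a path `x₁…xₙ` of positive length. -/
noncomputable def freeOfFP (k : Type) [Field k] {G : CGraph} (p : G.ext.FP) :
    FreeAlgebra k (Gen G) :=
  if p.edges.isEmpty then FreeAlgebra.ι k (Sum.inl (p.src : G.V))
  else (p.edges.map fun x => FreeAlgebra.ι k (genOfExtEdge x)).prod

/-- The class `[χ_p]` in the Cohn path algebra of a finite path `p` of the
extended graph. -/
noncomputable def cohnPathElem (k : Type) [Field k] {G : CGraph} (p : G.ext.FP) :
    CohnAlg k G :=
  RingQuot.mkAlgHom k (CohnRel k G) (freeOfFP k p)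

end CGraph

namespace CGraph

/-- The graph with one vertex `v` and two loops `e₁ = false`, `e₂ = true`. -/
def E14 : CGraph where
  V := Unit
  E := Bool
  src := fun _ => ()
  tgt := fun _ => ()

/-- The graph with one vertex `v` and one loop `e`. -/
def F14 : CGraph where
  V := Unit
  E := Unit
  src := fun _ => ()
  tgt := fun _ => ()

end CGraph

/-!
In `Ē` the path `e₂* e₁` is zero in `C_k(E)` by the Cohn relation, since `e₂ ≠ e₁`.
But `f̄` sends it to `e* e e`, whose class in `C_k(F)` is `χ_{e*} χ_e χ_e = χ_v χ_e = χ_e`.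
This is nonzero: `χ_v ↦ 1`, `χ_e ↦` the unilateral shift and `χ_{e*} ↦` the backward shift
on `k^(ℕ)` satisfy the Cohn relations, hence define a representation of `C_k(F)` in which
`χ_e` acts nontrivially.
-/

namespace Finsupp

variable (R : Type*) [Semiring R]

noncomputable def shiftRight : Module.End R (ℕ →₀ R) := lmapDomain R R (· + 1)

noncomputable def shiftLeft : Module.End R (ℕ →₀ R) := lmapDomain R R (· - 1)

theorem shiftLeft_mul_shiftRight : shiftLeft R * shiftRight R = 1 := by
  refine LinearMap.ext fun x => ?_
  change mapDomain (· - 1) (mapDomain (· + 1) x) = x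
  rw [← mapDomain_comp]
  exact mapDomain_id

theorem shiftRight_ne_zero [Nontrivial R] : shiftRight R ≠ 0 := fun h => by
  have hsingle : shiftRight R (single 0 1) = single 1 1 := mapDomain_single
  rw [h, LinearMap.zero_apply] at hsingle
  exact one_ne_zero (single_eq_zero.mp hsingle.symm)

end Finsupp

namespace CGraph

theorem Path.edges_comp {G : CGraph} :
    ∀ {a b c : G.V} (p : G.Path a b) (q : G.Path b c), (p.comp q).edges = p.edges ++ q.edges
  | _, _, _, .nil _, _ => rfl
  | _, _, _, .cons e p, q => congrArg (e :: ·) (edges_comp p q)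

theorem FP.edges_comp {G : CGraph} (p q : G.FP) (h : p.tgt = q.src) :
    (p.comp q h).edges = p.edges ++ q.edges := by
  obtain ⟨_, b, p⟩ := p
  obtain ⟨c, _, q⟩ := q
  obtain rfl : b = c := h
  exact Path.edges_comp p q

theorem FP.comp_congr {G : CGraph} {p p' q q' : G.FP} (hp : p = p') (hq : q = q')
    (h : p.tgt = q.src) (h' : p'.tgt = q'.src) : p.comp q h = p'.comp q' h' := by
  subst hp hq
  rfl

theorem IsBar.apply_ghost_comp_edge {G H : CGraph} {f : G.FP → H.FP}
    {fbar : G.ext.FP → H.ext.FP} (hbar : IsBar f fbar) {e e' : G.E} {p p' : H.FP}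
    (hp : f (FP.ofEdge e) = p) (hp' : f (FP.ofEdge e') = p')
    (h : (FP.ofEdge (G := G.ext) (.inr e)).tgt = (FP.ofEdge (G := G.ext) (.inl e')).src)
    (h' : p.star.tgt = p'.inclExt.src) :
    fbar ((FP.ofEdge (G := G.ext) (.inr e)).comp (FP.ofEdge (.inl e')) h) =
      p.star.comp p'.inclExt h' := by
  obtain ⟨⟨-, -, -, hcomp⟩, -, hedge, hghost⟩ := hbar
  obtain ⟨h'', hfbar⟩ := hcomp _ _ h
  rw [hfbar]
  exact FP.comp_congr (by rw [hghost, hp]) (by rw [hedge, hp']) h'' h'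

namespace CohnAlg

variable (k : Type) [Field k] {G : CGraph}

/- The generators `χ_v`, `χ_e` and `χ_{e*}`; the starred edges are the ghost edges. -/

noncomputable def vertex (v : G.V) : CohnAlg k G :=
  RingQuot.mkAlgHom k (CohnRel k G) (FreeAlgebra.ι k (Sum.inl v))

noncomputable def edge (e : G.E) : CohnAlg k G :=
  RingQuot.mkAlgHom k (CohnRel k G) (FreeAlgebra.ι k (Sum.inr (Sum.inl e)))

noncomputable def ghost (e : G.E) : CohnAlg k G :=
  RingQuot.mkAlgHom k (CohnRel k G) (FreeAlgebra.ι k (Sum.inr (Sum.inr e)))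

noncomputable def extEdge (x : G.ext.E) : CohnAlg k G :=
  Sum.elim (edge k) (ghost k) x

theorem vertex_src_mul_edge (e : G.E) : vertex k (G.src e) * edge k e = edge k e :=
  (map_mul _ _ _).symm.trans (RingQuot.mkAlgHom_rel k (.src_edge e))

theorem ghost_mul_edge_self (e : G.E) : ghost k e * edge k e = vertex k (G.tgt e) := by
  classical
  exact (map_mul _ _ _).symm.trans
    ((RingQuot.mkAlgHom_rel k (.cohn e e)).trans (congrArg _ (if_pos rfl)))

theorem ghost_mul_edge_of_ne {e f : G.E} (hef : e ≠ f) : ghost k e * edge k f = 0 := by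
  classical
  exact (map_mul _ _ _).symm.trans
    ((RingQuot.mkAlgHom_rel k (.cohn e f)).trans ((congrArg _ (if_neg hef)).trans (map_zero _)))

end CohnAlg

theorem cohnPathElem_eq_prod (k : Type) [Field k] {G : CGraph} (p : G.ext.FP)
    (hp : p.edges ≠ []) : cohnPathElem k p = (p.edges.map (CohnAlg.extEdge k)).prod := by
  rw [cohnPathElem, freeOfFP, if_neg (by simpa using hp), map_list_prod, List.map_map]
  congr 2
  funext x
  cases x <;> rfl

theorem cohnPathElem_ghost_comp_edge (k : Type) [Field k] {G : CGraph} (e f : G.E)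
    (h : (FP.ofEdge (G := G.ext) (.inr e)).tgt = (FP.ofEdge (G := G.ext) (.inl f)).src) :
    cohnPathElem k ((FP.ofEdge (G := G.ext) (.inr e)).comp (FP.ofEdge (.inl f)) h) =
      CohnAlg.ghost k e * CohnAlg.edge k f := by
  rw [cohnPathElem_eq_prod k _ (by rw [FP.edges_comp]; exact List.cons_ne_nil _ _),
    FP.edges_comp]
  exact congrArg (CohnAlg.ghost k e * ·) (mul_one (CohnAlg.edge k f))

structure CohnFamily (A : Type*) [Semiring A] (G : CGraph) where
  vertex : G.V → A
  edge : G.E → A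
  ghost : G.E → A
  vertex_mul_self : ∀ v, vertex v * vertex v = vertex v
  vertex_mul_vertex_of_ne : ∀ v w, v ≠ w → vertex v * vertex w = 0
  vertex_src_mul_edge : ∀ e, vertex (G.src e) * edge e = edge e
  edge_mul_vertex_tgt : ∀ e, edge e * vertex (G.tgt e) = edge e
  vertex_tgt_mul_ghost : ∀ e, vertex (G.tgt e) * ghost e = ghost e
  ghost_mul_vertex_src : ∀ e, ghost e * vertex (G.src e) = ghost e
  ghost_mul_edge_self : ∀ e, ghost e * edge e = vertex (G.tgt e)
  ghost_mul_edge_of_ne : ∀ e f, e ≠ f → ghost e * edge f = 0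

namespace CohnFamily

variable {k : Type} [Field k] {A : Type*} [Semiring A] [Algebra k A] {G : CGraph}

def onGen (F : CohnFamily A G) : Gen G → A :=
  Sum.elim F.vertex (Sum.elim F.edge F.ghost)

theorem freeLift_onGen_eq_of_cohnRel (F : CohnFamily A G) ⦃x y : FreeAlgebra k (Gen G)⦄
    (hxy : CohnRel k G x y) : FreeAlgebra.lift k F.onGen x = FreeAlgebra.lift k F.onGen y := by
  have lift_ι_mul_ι : ∀ a b : Gen G,
      FreeAlgebra.lift k F.onGen (FreeAlgebra.ι k a * FreeAlgebra.ι k b) =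
        F.onGen a * F.onGen b :=
    fun a b => by rw [map_mul, FreeAlgebra.lift_ι_apply, FreeAlgebra.lift_ι_apply]
  have lift_ι : ∀ a : Gen G, F.onGen a = FreeAlgebra.lift k F.onGen (FreeAlgebra.ι k a) :=
    fun a => (FreeAlgebra.lift_ι_apply _ _).symm
  cases hxy <;> refine (lift_ι_mul_ι _ _).trans ?_
  case vtx v w _ =>
    split_ifs with hvw
    · subst hvw
      exact (F.vertex_mul_self v).trans (lift_ι (.inl v))
    · exact (F.vertex_mul_vertex_of_ne v w hvw).trans (map_zero _).symm
  case src_edge e => exact (F.vertex_src_mul_edge e).trans (lift_ι (.inr (.inl e)))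
  case edge_tgt e => exact (F.edge_mul_vertex_tgt e).trans (lift_ι (.inr (.inl e)))
  case tgt_star e => exact (F.vertex_tgt_mul_ghost e).trans (lift_ι (.inr (.inr e)))
  case star_src e => exact (F.ghost_mul_vertex_src e).trans (lift_ι (.inr (.inr e)))
  case cohn e f _ =>
    split_ifs with hef
    · subst hef
      exact (F.ghost_mul_edge_self e).trans (lift_ι (.inl (G.tgt e)))
    · exact (F.ghost_mul_edge_of_ne e f hef).trans (map_zero _).symm

noncomputable def lift (F : CohnFamily A G) : CohnAlg k G →ₐ[k] A :=
  RingQuot.liftAlgHom k ⟨FreeAlgebra.lift k F.onGen, F.freeLift_onGen_eq_of_cohnRel⟩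

theorem lift_edge (F : CohnFamily A G) (e : G.E) :
    lift (k := k) F (CohnAlg.edge k e) = F.edge e :=
  (RingQuot.liftAlgHom_mkAlgHom_apply _ _ _ _).trans (FreeAlgebra.lift_ι_apply _ _)

end CohnFamily

theorem CohnAlg.edge_ne_zero_of_cohnFamily {k : Type} [Field k] {A : Type*} [Semiring A]
    [Algebra k A] {G : CGraph} (F : CohnFamily A G) {e : G.E} (he : F.edge e ≠ 0) :
    CohnAlg.edge k e ≠ 0 :=
  fun h => he (by rw [← F.lift_edge (k := k), h, map_zero])

noncomputable def F14.toeplitzFamily (k : Type) [Field k] :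
    CohnFamily (Module.End k (ℕ →₀ k)) F14 where
  vertex _ := 1
  edge _ := Finsupp.shiftRight k
  ghost _ := Finsupp.shiftLeft k
  vertex_mul_self _ := mul_one 1
  vertex_mul_vertex_of_ne _ _ hvw := (hvw rfl).elim
  vertex_src_mul_edge _ := one_mul _
  edge_mul_vertex_tgt _ := mul_one _
  vertex_tgt_mul_ghost _ := one_mul _
  ghost_mul_vertex_src _ := mul_one _
  ghost_mul_edge_self _ := Finsupp.shiftLeft_mul_shiftRight k
  ghost_mul_edge_of_ne _ _ hef := (hef rfl).elim

theorem F14.edge_ne_zero (k : Type) [Field k] (e : F14.E) : CohnAlg.edge k e ≠ 0 :=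
  CohnAlg.edge_ne_zero_of_cohnFamily (toeplitzFamily k) (Finsupp.shiftRight_ne_zero k)

theorem F14.cohnPathElem_ghost_comp_edge_sq (k : Type) [Field k] (e : F14.E) :
    cohnPathElem k ((FP.ofEdge e).star.comp ((FP.ofEdge e).comp (FP.ofEdge e) rfl).inclExt rfl) =
      CohnAlg.edge k e := by
  rw [cohnPathElem_eq_prod k _ (by exact List.cons_ne_nil _ _)]
  calc CohnAlg.ghost k e * (CohnAlg.edge k e * (CohnAlg.edge k e * 1))
      = CohnAlg.ghost k e * CohnAlg.edge k e * CohnAlg.edge k e := by rw [mul_one, mul_assoc]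
    _ = CohnAlg.edge k e := by
      rw [CohnAlg.ghost_mul_edge_self]
      exact CohnAlg.vertex_src_mul_edge k e

def Path.toF14 : ∀ {v w : E14.V}, E14.Path v w → F14.Path () ()
  | _, _, .nil _ => .nil (G := F14) ()
  | _, _, .cons true p => .cons (G := F14) () p.toF14
  | _, _, .cons false p => .cons (G := F14) () (.cons (G := F14) () p.toF14)

theorem Path.toF14_comp : ∀ {a b c : E14.V} (p : E14.Path a b) (q : E14.Path b c),
    (p.comp q).toF14 = p.toF14.comp q.toF14
  | _, _, _, .nil _, _ => rfl
  | _, _, _, .cons true p, q => congrArg (Path.cons (G := F14) ()) (toF14_comp p q)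
  | _, _, _, .cons false p, q =>
    congrArg (fun r => Path.cons (G := F14) () (Path.cons (G := F14) () r)) (toF14_comp p q)

def FP.toF14 (p : E14.FP) : F14.FP := ⟨(), (), p.2.2.toF14⟩

theorem FP.isPathHom_toF14 : IsPathHom FP.toF14 := by
  refine ⟨fun _ => ⟨(), rfl⟩, fun _ => rfl, fun _ => rfl, fun p q h => ⟨rfl, ?_⟩⟩
  obtain ⟨_, b, p⟩ := p
  obtain ⟨c, _, q⟩ := q
  obtain rfl : b = c := h
  exact congrArg (Sigma.mk ()) (congrArg (Sigma.mk ()) (Path.toF14_comp p q))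

theorem FP.vertexInjective_toF14 : VertexInjective FP.toF14 :=
  fun _ _ _ => rfl

theorem FP.toF14_ofEdge_injective :
    Function.Injective (fun e : E14.E => (FP.ofEdge e).toF14) := by
  intro e e' h
  cases e <;> cases e' <;> first | rfl | exact absurd (congrArg FP.length h) (by decide)

end CGraph

open CGraph in
/-- For `E` the two-loop graph and `F` the one-loop graph, the path
homomorphism `f` with `f(e₂) = e` and `f(e₁) = e²` is injective on vertices and
on edges, yet the prescription `[χ_p] ↦ [χ_{f̄(p)}]` does not define an algebra
homomorphism of Cohn path algebras `C_k(E) → C_k(F)`: no algebra homomorphism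
satisfies it. Hence injectivity on edges does not imply the monotonicity
condition. -/
theorem edge_injective_cohn_not_welldefined (k : Type) [Field k] :
    (∃ f : E14.FP → F14.FP,
      IsPathHom f ∧ VertexInjective f ∧
      Function.Injective (fun e : E14.E => f (FP.ofEdge e)) ∧
      f (FP.ofEdge true) = FP.ofEdge () ∧
      f (FP.ofEdge false) = FP.comp (FP.ofEdge (G := F14) ()) (FP.ofEdge (G := F14) ()) rfl) ∧
    (∀ (f : E14.FP → F14.FP) (fbar : E14.ext.FP → F14.ext.FP),
      IsPathHom f →
      f (FP.ofEdge true) = FP.ofEdge () →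
      f (FP.ofEdge false) = FP.comp (FP.ofEdge (G := F14) ()) (FP.ofEdge (G := F14) ()) rfl →
      IsBar f fbar →
      ¬∃ φ : CohnAlg k E14 →ₐ[k] CohnAlg k F14,
        ∀ p : E14.ext.FP, φ (cohnPathElem k p) = cohnPathElem k (fbar p)) := by
  refine ⟨⟨FP.toF14, FP.isPathHom_toF14, FP.vertexInjective_toF14, FP.toF14_ofEdge_injective,
    rfl, rfl⟩, ?_⟩
  rintro f fbar - htrue hfalse hbar ⟨φ, hφ⟩
  have hzero : cohnPathElem k ((FP.ofEdge (G := E14.ext) (.inr true)).comp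
      (FP.ofEdge (.inl false)) rfl) = 0 :=
    (cohnPathElem_ghost_comp_edge k true false rfl).trans
      (CohnAlg.ghost_mul_edge_of_ne k (G := E14) Bool.false_ne_true.symm)
  have himage : fbar ((FP.ofEdge (G := E14.ext) (.inr true)).comp (FP.ofEdge (.inl false)) rfl) =
      (FP.ofEdge (G := F14) ()).star.comp ((FP.ofEdge ()).comp (FP.ofEdge ()) rfl).inclExt rfl :=
    hbar.apply_ghost_comp_edge htrue hfalse rfl rfl
  apply F14.edge_ne_zero k ()
  calc CohnAlg.edge k () = cohnPathElem k (fbar _) :=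
        (F14.cohnPathElem_ghost_comp_edge_sq k ()).symm.trans (congrArg _ himage.symm)
    _ = φ (cohnPathElem k _) := (hφ _).symm
    _ = 0 := (congrArg φ hzero).trans (map_zero φ)
end

section
/- Vertex-injective path homomorphisms that satisfy both the monotonicity condition on edges and the regularity condition form a subcategory of the category of graphs and vertex-injective monotone path homomorphisms: identities are regular and the composite of two regular monotone vertex-injective path homomorphisms is regular. -/
namespace DirGraph

/-- A vertex is regular if it emits at least one and only finitely many edges. -/
def RegularV (G : DirGraph) (v : G.V) : Prop :=
  {e : G.E | G.src e = v}.Finite ∧ {e : G.E | G.src e = v}.Nonempty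

/-- A vertex is 0-regular if it emits exactly one edge and that edge is a loop
at the vertex. -/
def Reg0V (G : DirGraph) (v : G.V) : Prop :=
  ∃ e : G.E, {x : G.E | G.src x = v} = {e} ∧ G.tgt e = v

/-- The image `f(s⁻¹(v))` of the set of edges emitted from `v`. -/
def EdgeImg {G H : DirGraph} (f : G.FP → H.FP) (v : G.V) : Set H.FP :=
  (fun e => f (FP.ofEdge e)) '' {e : G.E | G.src e = v}

/-- The regularity condition at a vertex `v`: `f` is injective on `s⁻¹(v)`, and
`p ∈ f(s⁻¹(v))` if and only if (i) `p` is a path of positive length, (ii) any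
extension `pq ∈ f(s⁻¹(v))` has `q` trivial, and (iii) for every `i` and every
edge `x` with the same source as the `i`-th edge of `p`, some element of
`f(s⁻¹(v))` extends `e₁…e_{i−1}x`. -/
def RegCond {G H : DirGraph} (f : G.FP → H.FP) (v : G.V) : Prop :=
  Set.InjOn (fun e => f (FP.ofEdge e)) {e : G.E | G.src e = v} ∧
  ∀ p : H.FP, p ∈ EdgeImg f v ↔
    (0 < p.length ∧
     (∀ (q : H.FP) (h : p.tgt = q.src),
        FP.comp p q h ∈ EdgeImg f v → q = FP.ofVertex p.tgt) ∧
     (∀ (i : ℕ) (hi : i < p.length) (x : H.E),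
        H.src x = H.src (p.edges.get ⟨i, hi⟩) →
        ∃ q ∈ EdgeImg f v, (p.edges.take i ++ [x]) <+: q.edges))

/-- A path homomorphism is regular if the regularity condition holds at every
regular vertex which is not 0-regular, and at every 0-regular vertex either the
regularity condition holds or `f(s⁻¹(v)) = {f(v)}`. -/
def RegularHom {G H : DirGraph} (f : G.FP → H.FP) : Prop :=
  ∀ v : G.V, RegularV G v →
    ((¬ Reg0V G v → RegCond f v) ∧
     (Reg0V G v → (RegCond f v ∨ EdgeImg f v = {f (FP.ofVertex v)})))

end DirGraph

/-!
A path homomorphism acts on edge lists by `flatMap` of its values on edges, so the monotonicity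
of `g` lets one cancel the images of a common prefix edge by edge. Hence `g` is injective on the
prefix-free family `S = f(s⁻¹(v))`, and `g(S)` inherits conditions (ii) and (iii) from `S` and
from the regularity of `g` at the sources of the edges of paths in `S`; these sources are
regular vertices because `S` is finite and satisfies (iii). The argument fails only if `g`
sends some `p ∈ S` to a vertex. Then the common source of `S` is a 0-regular vertex of `H`, every
path in `S` is a power of its loop, and vertex injectivity and monotonicity of `f` force `v` to
be 0-regular, so that `(g ∘ f)(s⁻¹(v)) = {g(f(v))}`.
-/

lemma List.exists_eq_append_cons_of_lt_length_flatMap {α β : Type*} {φ : α → List β} :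
    ∀ {l : List α} {t : ℕ} (ht : t < (l.flatMap φ).length),
      ∃ (c : List α) (x : α) (r : List α) (s : ℕ) (hs : s < (φ x).length),
        l = c ++ x :: r ∧ (l.flatMap φ).take t = c.flatMap φ ++ (φ x).take s ∧
        (l.flatMap φ)[t] = (φ x)[s]
  | [], _, ht => by simp at ht
  | x :: l, t, ht => by
    by_cases hx : t < (φ x).length
    · exact ⟨[], x, l, t, hx, rfl, by simp [List.take_append_of_le_length hx.le],
        by simp [List.getElem_append_left hx]⟩
    · have ht' : t - (φ x).length < (l.flatMap φ).length := by
        rw [List.flatMap_cons, List.length_append] at ht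
        omega
      obtain ⟨c, y, r, s, hs, rfl, htake, hget⟩ :=
        exists_eq_append_cons_of_lt_length_flatMap ht'
      refine ⟨x :: c, y, r, s, hs, rfl, ?_, ?_⟩
      · rw [List.flatMap_cons, List.take_append, htake, List.take_of_length_le (by omega)]
        simp
      · rw [← hget]
        simp only [List.flatMap_cons]
        rw [List.getElem_append_right (by omega)]

namespace DirGraph

variable {G H K : DirGraph}

namespace Path

@[simp]
lemma edges_cons (e : G.E) {w : G.V} (p : G.Path (G.tgt e) w) :
    (Path.cons e p).edges = e :: p.edges := rfl

@[simp]
lemma edges_comp_s15 : ∀ {a b c : G.V} (p : G.Path a b) (q : G.Path b c),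
    (p.comp q).edges = p.edges ++ q.edges
  | _, _, _, .nil _, _ => rfl
  | _, _, _, .cons e p, q => congrArg (e :: ·) (edges_comp_s15 p q)

lemma sigma_eq_of_edges_eq : ∀ {a b a' b' : G.V} (p : G.Path a b) (q : G.Path a' b'),
    a = a' → p.edges = q.edges → (⟨a, b, p⟩ : G.FP) = ⟨a', b', q⟩
  | _, _, _, _, .nil _, .nil _, rfl, _ => rfl
  | _, _, _, _, .cons e p, .cons e' q, _, he => by
    obtain ⟨rfl, he⟩ := List.cons.inj he
    cases sigma_eq_of_edges_eq p q rfl he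
    rfl

lemma exists_comp_eq_take : ∀ {a b : G.V} (p : G.Path a b) (n : ℕ),
    ∃ (c : G.V) (p₁ : G.Path a c) (p₂ : G.Path c b),
      p = p₁.comp p₂ ∧ p₁.edges = p.edges.take n
  | _, _, p, 0 => ⟨_, .nil _, p, rfl, rfl⟩
  | _, _, .nil _, _ + 1 => ⟨_, .nil _, .nil _, rfl, rfl⟩
  | _, _, .cons e p, n + 1 => by
    obtain ⟨c, p₁, p₂, rfl, h⟩ := exists_comp_eq_take p n
    exact ⟨c, .cons e p₁, p₂, rfl, congrArg (e :: ·) h⟩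

lemma edges_prefix_or_prefix_of_flatMap_prefix {β : Type*} {φ : G.E → List β}
    (hφ : ∀ e e', G.src e = G.src e' → φ e <+: φ e' → e = e') :
    ∀ {a b a' b' : G.V} (p : G.Path a b) (q : G.Path a' b'), a = a' →
      p.edges.flatMap φ <+: q.edges.flatMap φ → p.edges <+: q.edges ∨ q.edges <+: p.edges
  | _, _, _, _, .nil _, _, _, _ => Or.inl List.nil_prefix
  | _, _, _, _, .cons _ _, .nil _, _, _ => Or.inr List.nil_prefix
  | _, _, _, _, .cons e p, .cons e' q, hsrc, h => by
    simp only [edges_cons, List.flatMap_cons] at h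
    obtain rfl : e = e' := by
      rcases List.prefix_or_prefix_of_prefix ((List.prefix_append _ _).trans h)
        (List.prefix_append _ _) with h' | h'
      exacts [hφ e e' hsrc h', (hφ e' e hsrc.symm h').symm]
    simpa using edges_prefix_or_prefix_of_flatMap_prefix hφ p q rfl
      ((List.prefix_append_right_inj _).1 h)

end Path

namespace FP

@[simp] lemma edges_ofEdge (e : G.E) : (ofEdge e).edges = [e] := rfl

@[simp]
lemma edges_comp_s15 (p q : G.FP) (h : p.tgt = q.src) :
    (p.comp q h).edges = p.edges ++ q.edges := by
  obtain ⟨a, b, p⟩ := p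
  obtain ⟨_, c, q⟩ := q
  cases h
  exact Path.edges_comp_s15 p q

lemma length_comp (p q : G.FP) (h : p.tgt = q.src) :
    (p.comp q h).length = p.length + q.length := by
  simp only [length, edges_comp_s15, List.length_append]

lemma ext {p q : G.FP} (hsrc : p.src = q.src) (hedges : p.edges = q.edges) : p = q :=
  Path.sigma_eq_of_edges_eq p.2.2 q.2.2 hsrc hedges

@[simp]
lemma comp_ofVertex (p : G.FP) : p.comp (ofVertex p.tgt) rfl = p :=
  ext rfl ((edges_comp_s15 _ _ _).trans (List.append_nil _))

lemma eq_ofVertex_of_length_eq_zero {p : G.FP} (h : p.length = 0) : p = ofVertex p.src :=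
  ext rfl (List.eq_nil_of_length_eq_zero h)

lemma src_eq_of_edges_eq_cons {p : G.FP} {e : G.E} {l : List G.E} (h : p.edges = e :: l) :
    p.src = G.src e := by
  obtain ⟨_, _, _ | ⟨e', _⟩⟩ := p
  · cases h
  · cases h
    rfl

lemma le_iff {p q : G.FP} : p.le q ↔ p.src = q.src ∧ p.edges <+: q.edges := by
  constructor
  · rintro ⟨r, h, rfl⟩
    exact ⟨rfl, by simp⟩
  · rintro ⟨hsrc, l, hl⟩
    obtain ⟨c, q₁, q₂, hq, hq₁⟩ := Path.exists_comp_eq_take q.2.2 p.edges.length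
    have hp : p = ⟨q.1, c, q₁⟩ :=
      ext hsrc ((List.prefix_iff_eq_take.1 ⟨l, hl⟩).trans hq₁.symm)
    subst hp
    refine ⟨⟨c, q.2.1, q₂⟩, rfl, ?_⟩
    exact Sigma.ext rfl (heq_of_eq (Sigma.ext rfl (heq_of_eq hq)))

end FP

namespace IsPathHom

variable {f : G.FP → H.FP}

lemma map_ofVertex (hf : IsPathHom f) (v : G.V) :
    f (FP.ofVertex v) = FP.ofVertex (f (FP.ofVertex v)).src := by
  obtain ⟨w, hw⟩ := hf.1 v
  rw [hw]
  rfl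

lemma map_ofVertex_src (hf : IsPathHom f) (p : G.FP) :
    f (FP.ofVertex p.src) = FP.ofVertex (f p).src :=
  hf.2.1 p

lemma map_ofVertex_tgt (hf : IsPathHom f) (p : G.FP) :
    f (FP.ofVertex p.tgt) = FP.ofVertex (f p).tgt :=
  hf.2.2.1 p

lemma src_eq_src (hf : IsPathHom f) {p q : G.FP} (h : p.src = q.src) :
    (f p).src = (f q).src := by
  have := hf.map_ofVertex_src p
  rw [h, hf.map_ofVertex_src q] at this
  exact (congrArg FP.src this).symm

lemma edges_map (hf : IsPathHom f) (p : G.FP) :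
    (f p).edges = p.edges.flatMap fun e => (f (FP.ofEdge e)).edges := by
  obtain ⟨a, b, p⟩ := p
  induction p with
  | nil v =>
    show (f (FP.ofVertex v)).edges = []
    rw [hf.map_ofVertex v]
    rfl
  | cons e p ih =>
    obtain ⟨_, hc⟩ := hf.2.2.2 (FP.ofEdge e) ⟨_, _, p⟩ rfl
    rw [show (⟨_, _, .cons e p⟩ : G.FP) = (FP.ofEdge e).comp ⟨_, _, p⟩ rfl from rfl, hc,
      FP.edges_comp_s15, ih]
    rfl

lemma eq_map_ofVertex_src_of_length_eq_zero (hf : IsPathHom f) {p : G.FP} (h : (f p).length = 0) :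
    f p = f (FP.ofVertex p.src) :=
  (FP.eq_ofVertex_of_length_eq_zero h).trans (hf.map_ofVertex_src p).symm

lemma ofVertex_src_of_mem_edgeImg (hf : IsPathHom f) {v : G.V} {p : H.FP} (hp : p ∈ EdgeImg f v) :
    FP.ofVertex p.src = f (FP.ofVertex v) := by
  obtain ⟨e, rfl, rfl⟩ := hp
  exact (hf.map_ofVertex_src (FP.ofEdge e)).symm

end IsPathHom

lemma edgeImg_comp (f : G.FP → H.FP) (g : H.FP → K.FP) (v : G.V) :
    EdgeImg (g ∘ f) v = g '' EdgeImg f v :=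
  (Set.image_image g _ _).symm

lemma EdgeMonotone.eq_of_src_eq_of_prefix {f : G.FP → H.FP} (hmf : EdgeMonotone f)
    (hf : IsPathHom f) {e e' : G.E} (hsrc : G.src e = G.src e')
    (h : (f (FP.ofEdge e)).edges <+: (f (FP.ofEdge e')).edges) : e = e' :=
  hmf e e' (FP.le_iff.2 ⟨hf.src_eq_src hsrc, h⟩)

/-- Conditions (i)–(iii) of `RegCond`, required only of the members of `S = f(s⁻¹(v))`: the
converse direction of `RegCond` then holds automatically (`regCond_iff`). -/
structure IsRegularFamily (S : Set G.FP) : Prop where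
  length_pos : ∀ p ∈ S, 0 < p.length
  eq_ofVertex_of_comp_mem : ∀ p ∈ S, ∀ (q : G.FP) (h : p.tgt = q.src),
    p.comp q h ∈ S → q = FP.ofVertex p.tgt
  exists_mem_prefix : ∀ p ∈ S, ∀ (i : ℕ) (hi : i < p.length) (x : G.E),
    G.src x = G.src (p.edges.get ⟨i, hi⟩) → ∃ q ∈ S, p.edges.take i ++ [x] <+: q.edges

lemma FP.mem_of_prefix_of_mem {S : Set G.FP} {p q : G.FP} (hpos : 0 < p.length)
    (hmax : ∀ (r : G.FP) (h : p.tgt = r.src), p.comp r h ∈ S → r = FP.ofVertex p.tgt)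
    (hq : q ∈ S) (hpq : p.edges <+: q.edges) : p ∈ S := by
  obtain ⟨e, l, hel⟩ := List.exists_cons_of_length_pos hpos
  have hsrc : p.src = q.src := by
    obtain ⟨l', hl'⟩ := hpq
    rw [FP.src_eq_of_edges_eq_cons hel,
      FP.src_eq_of_edges_eq_cons (l := l ++ l') (by rw [← hl', hel, List.cons_append])]
  obtain ⟨r, hr, rfl⟩ := FP.le_iff.2 ⟨hsrc, hpq⟩
  obtain rfl := hmax r hr hq
  simpa using hq

lemma regCond_iff {f : G.FP → H.FP} {v : G.V} :
    RegCond f v ↔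
      Set.InjOn (fun e => f (FP.ofEdge e)) {e | G.src e = v} ∧ IsRegularFamily (EdgeImg f v) := by
  refine ⟨fun ⟨hinj, hmem⟩ => ⟨hinj, fun p hp => ((hmem p).1 hp).1,
    fun p hp => ((hmem p).1 hp).2.1, fun p hp => ((hmem p).1 hp).2.2⟩,
    fun ⟨hinj, hS⟩ =>
      ⟨hinj, fun p => ⟨fun hp => ⟨hS.1 p hp, hS.2 p hp, hS.3 p hp⟩, ?_⟩⟩⟩
  rintro ⟨hpos, hmax, hext⟩
  have hlast : p.length - 1 < p.length := Nat.sub_lt hpos one_pos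
  obtain ⟨q, hq, hpq⟩ := hext _ hlast _ rfl
  refine FP.mem_of_prefix_of_mem hpos hmax hq ?_
  rwa [List.get_eq_getElem, List.take_append_getElem, Nat.sub_add_cancel hpos,
    FP.length, List.take_length] at hpq

lemma regCond_id (v : G.V) : RegCond (id : G.FP → G.FP) v := by
  refine regCond_iff.2 ⟨fun e _ e' _ h => ?_, ⟨?_, ?_, ?_⟩⟩
  · simpa using congrArg FP.edges h
  · rintro _ ⟨e, -, rfl⟩
    exact Nat.one_pos
  · rintro _ ⟨e, -, rfl⟩ q hq ⟨e', -, he'⟩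
    have hlen := congrArg FP.length he'
    simp only [id, FP.length_comp] at hlen
    rw [FP.eq_ofVertex_of_length_eq_zero (p := q) (by simpa [FP.length] using hlen), ← hq]
  · rintro _ ⟨e, rfl, rfl⟩ i hi x hx
    obtain rfl : i = 0 := by simpa [FP.length] using hi
    exact ⟨FP.ofEdge x, ⟨x, hx, rfl⟩, by simp⟩

theorem regularHom_id (G : DirGraph) : RegularHom (id : G.FP → G.FP) :=
  fun v _ => ⟨fun _ => regCond_id v, fun _ => Or.inl (regCond_id v)⟩

lemma RegularHom.regCond_src {g : H.FP → K.FP} (hrg : RegularHom g) (hg : IsPathHom g)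
    {x : H.E} (hx : RegularV H (H.src x)) (hpos : 0 < (g (FP.ofEdge x)).length) :
    RegCond g (H.src x) := by
  obtain ⟨hreg, hreg0⟩ := hrg _ hx
  by_cases h0 : Reg0V H (H.src x)
  · refine (hreg0 h0).resolve_right fun hcol => ?_
    have hmem : g (FP.ofEdge x) ∈ EdgeImg g (H.src x) := ⟨x, rfl, rfl⟩
    rw [hcol, Set.mem_singleton_iff, hg.map_ofVertex] at hmem
    rw [hmem] at hpos
    exact lt_irrefl 0 hpos
  · exact hreg h0

namespace IsRegularFamily

variable {S : Set H.FP}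

lemma regularV_src_get (hS : IsRegularFamily S) (hfin : S.Finite) {p : H.FP} (hp : p ∈ S)
    (i : ℕ) (hi : i < p.length) : RegularV H (H.src (p.edges.get ⟨i, hi⟩)) := by
  refine ⟨(hfin.biUnion fun q _ => q.edges.finite_toSet).subset fun x hx => ?_, ⟨_, rfl⟩⟩
  obtain ⟨q, hq, hpre⟩ := hS.exists_mem_prefix p hp i hi x hx
  exact Set.mem_biUnion hq (hpre.subset (by simp))

lemma eq_of_edges_prefix (hS : IsRegularFamily S) {p q : H.FP} (hp : p ∈ S) (hq : q ∈ S)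
    (hsrc : p.src = q.src) (h : p.edges <+: q.edges) : p = q := by
  obtain ⟨r, hr, rfl⟩ := FP.le_iff.2 ⟨hsrc, h⟩
  obtain rfl := hS.eq_ofVertex_of_comp_mem p hp r hr hq
  exact (FP.comp_ofVertex p).symm

lemma eq_of_map_edges_prefix (hS : IsRegularFamily S) {w : H.V} (hsrc : ∀ p ∈ S, p.src = w)
    {g : H.FP → K.FP} (hg : IsPathHom g) (hmg : EdgeMonotone g) {p q : H.FP} (hp : p ∈ S)
    (hq : q ∈ S) (h : (g p).edges <+: (g q).edges) : p = q := by
  rw [hg.edges_map, hg.edges_map] at h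
  have hpq : p.src = q.src := (hsrc p hp).trans (hsrc q hq).symm
  rcases Path.edges_prefix_or_prefix_of_flatMap_prefix
    (fun _ _ => hmg.eq_of_src_eq_of_prefix hg) p.2.2 q.2.2 hpq h with h' | h'
  exacts [hS.eq_of_edges_prefix hp hq hpq h', (hS.eq_of_edges_prefix hq hp hpq.symm h').symm]

lemma exists_mem_map_prefix (hS : IsRegularFamily S) (hfin : S.Finite) {g : H.FP → K.FP}
    (hg : IsPathHom g) (hrg : RegularHom g) {p : H.FP} (hp : p ∈ S) (t : ℕ)
    (ht : t < (g p).length) (y : K.E) (hy : K.src y = K.src ((g p).edges.get ⟨t, ht⟩)) :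
    ∃ q ∈ S, (g p).edges.take t ++ [y] <+: (g q).edges := by
  -- The `t`-th edge of `g p` is the `s`-th edge of `g x` for the edge `x` of `p` after `c`:
  -- extend first by regularity of `g` at the source of `x`, then by regularity of `S` there.
  set φ : H.E → List K.E := fun e => (g (FP.ofEdge e)).edges
  have hgp : (g p).edges = p.edges.flatMap φ := hg.edges_map p
  obtain ⟨c, x, r, s, hs, hcxr, htake, hget⟩ :=
    List.exists_eq_append_cons_of_lt_length_flatMap (hgp ▸ ht : t < (p.edges.flatMap φ).length)
  have hc : c.length < p.length := by simp [FP.length, hcxr]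
  have hx : p.edges.get ⟨c.length, hc⟩ = x := by simp [hcxr]
  have hgx : RegCond g (H.src x) :=
    hrg.regCond_src hg (hx ▸ hS.regularV_src_get hfin hp _ hc) (Nat.zero_lt_of_lt hs)
  obtain ⟨_, ⟨x', hx', rfl⟩, hx'pre⟩ :=
    (regCond_iff.1 hgx).2.exists_mem_prefix _ ⟨x, rfl, rfl⟩ s hs y
      (hy.trans (congrArg K.src ((List.getElem_of_eq hgp ht).trans hget)))
  obtain ⟨q, hq, hcq⟩ := hS.exists_mem_prefix p hp c.length hc x' (by rw [hx', hx])
  refine ⟨q, hq, ?_⟩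
  rw [show p.edges.take c.length = c by simp [hcxr]] at hcq
  rw [hgp, htake, hg.edges_map q, List.append_assoc]
  calc c.flatMap φ ++ ((φ x).take s ++ [y]) <+: c.flatMap φ ++ φ x' :=
        (List.prefix_append_right_inj _).2 hx'pre
    _ = (c ++ [x']).flatMap φ := by simp
    _ <+: q.edges.flatMap φ := hcq.flatMap φ

theorem image (hS : IsRegularFamily S) (hfin : S.Finite) {w : H.V} (hsrc : ∀ p ∈ S, p.src = w)
    {g : H.FP → K.FP} (hg : IsPathHom g) (hmg : EdgeMonotone g) (hrg : RegularHom g)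
    (hpos : ∀ p ∈ S, 0 < (g p).length) : IsRegularFamily (g '' S) where
  length_pos := by
    rintro _ ⟨p, hp, rfl⟩
    exact hpos p hp
  eq_ofVertex_of_comp_mem := by
    rintro _ ⟨p, hp, rfl⟩ q hq ⟨p', hp', he⟩
    obtain rfl :=
      hS.eq_of_map_edges_prefix hsrc hg hmg hp hp' ⟨q.edges, by rw [he, FP.edges_comp_s15]⟩
    have hlen := congrArg FP.length he
    rw [FP.length_comp] at hlen
    rw [FP.eq_ofVertex_of_length_eq_zero (p := q) (by omega), ← hq]
  exists_mem_prefix := by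
    rintro _ ⟨p, hp, rfl⟩ t ht y hy
    obtain ⟨q, hq, hpre⟩ := hS.exists_mem_map_prefix hfin hg hrg hp t ht y hy
    exact ⟨g q, ⟨q, hq, rfl⟩, hpre⟩

end IsRegularFamily

theorem regCond_comp {f : G.FP → H.FP} {g : H.FP → K.FP} {v : G.V} (hf : IsPathHom f)
    (hg : IsPathHom g) (hmg : EdgeMonotone g) (hrg : RegularHom g) (hv : RegularV G v)
    (hrcf : RegCond f v) (hpos : ∀ p ∈ EdgeImg f v, 0 < (g p).length) :
    RegCond (g ∘ f) v := by
  obtain ⟨hinj, hS⟩ := regCond_iff.1 hrcf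
  have hsrc : ∀ p ∈ EdgeImg f v, p.src = (f (FP.ofVertex v)).src :=
    fun p hp => by rw [← hf.ofVertex_src_of_mem_edgeImg hp]; rfl
  rw [regCond_iff, edgeImg_comp]
  refine ⟨Set.InjOn.comp (fun p hp q hq h => ?_) hinj (Set.mapsTo_image _ _),
    hS.image (hv.1.image _) hsrc hg hmg hrg hpos⟩
  exact hS.eq_of_map_edges_prefix hsrc hg hmg hp hq (h ▸ List.prefix_refl _)

lemma Path.edges_eq_replicate_of_unique_loop {w : G.V} {ℓ : G.E}
    (hset : {x : G.E | G.src x = w} = {ℓ}) (hloop : G.tgt ℓ = w) :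
    ∀ {a b : G.V} (p : G.Path a b), a = w →
      p.edges = List.replicate p.edges.length ℓ ∧ b = w
  | _, _, .nil _, h => ⟨rfl, h⟩
  | _, _, .cons e p, h => by
    obtain rfl : e = ℓ := (Set.ext_iff.1 hset e).1 h
    obtain ⟨hp, hb⟩ := edges_eq_replicate_of_unique_loop hset hloop p hloop
    exact ⟨congrArg (e :: ·) hp, hb⟩

lemma reg0V_of_reg0V_src_map {f : G.FP → H.FP} {v : G.V} (hf : IsPathHom f)
    (hvf : VertexInjective f) (hmf : EdgeMonotone f) (hv : {e : G.E | G.src e = v}.Nonempty)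
    (hw : Reg0V H (f (FP.ofVertex v)).src) : Reg0V G v := by
  obtain ⟨ℓ, hset, hloop⟩ := hw
  have hloops : ∀ e, G.src e = v →
      (f (FP.ofEdge e)).edges = List.replicate (f (FP.ofEdge e)).length ℓ ∧
        (f (FP.ofEdge e)).tgt = (f (FP.ofVertex v)).src :=
    fun e he => Path.edges_eq_replicate_of_unique_loop hset hloop (f (FP.ofEdge e)).2.2
      (hf.src_eq_src (p := FP.ofEdge e) he)
  have heq : ∀ e e', G.src e = v → G.src e' = v →
      (f (FP.ofEdge e)).length ≤ (f (FP.ofEdge e')).length → e = e' := by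
    intro e e' he he' hle
    refine hmf.eq_of_src_eq_of_prefix hf (he.trans he'.symm) ?_
    rw [(hloops e he).1, (hloops e' he').1]
    exact List.prefix_replicate_iff.2 ⟨by simpa using hle, by simp⟩
  obtain ⟨e, he⟩ := hv
  refine ⟨e, Set.eq_singleton_iff_unique_mem.2 ⟨he, fun e' he' => ?_⟩, hvf ?_⟩
  · rcases le_total (f (FP.ofEdge e)).length (f (FP.ofEdge e')).length with hle | hle
    exacts [(heq e e' he he' hle).symm, heq e' e he' he hle]
  · change f (FP.ofVertex (FP.ofEdge e).tgt) = f (FP.ofVertex v)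
    rw [hf.map_ofVertex_tgt, (hloops e he).2, ← hf.map_ofVertex]

theorem reg0V_of_length_map_eq_zero {f : G.FP → H.FP} {g : H.FP → K.FP} {v : G.V}
    (hf : IsPathHom f) (hvf : VertexInjective f) (hmf : EdgeMonotone f) (hg : IsPathHom g)
    (hrg : RegularHom g) (hv : RegularV G v) (hrcf : RegCond f v) {p : H.FP}
    (hp : p ∈ EdgeImg f v) (h0 : (g p).length = 0) : Reg0V G v := by
  obtain ⟨-, hS⟩ := regCond_iff.1 hrcf
  obtain ⟨x, l, hxl⟩ := List.exists_cons_of_length_pos (hS.length_pos p hp)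
  have hx0 : (g (FP.ofEdge x)).edges = [] := by
    have hgp := hg.edges_map p
    rw [List.eq_nil_of_length_eq_zero h0, hxl, List.flatMap_cons] at hgp
    exact (List.append_eq_nil_iff.1 hgp.symm).1
  have hxsrc : H.src x = (f (FP.ofVertex v)).src := by
    rw [← FP.src_eq_of_edges_eq_cons hxl, ← hf.ofVertex_src_of_mem_edgeImg hp]
    rfl
  have hxreg : RegularV H (H.src x) := by
    simpa [hxl] using hS.regularV_src_get (hv.1.image _) hp 0 (hS.length_pos p hp)
  refine reg0V_of_reg0V_src_map hf hvf hmf hv.2 (hxsrc ▸ ?_)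
  by_contra hx
  have hpos := (regCond_iff.1 ((hrg _ hxreg).1 hx)).2.length_pos _ ⟨x, rfl, rfl⟩
  simp [FP.length, hx0] at hpos

lemma edgeImg_comp_eq_singleton {f : G.FP → H.FP} {g : H.FP → K.FP} {v : G.V}
    (hf : IsPathHom f) (hg : IsPathHom g) (hv : Reg0V G v) {p : H.FP} (hp : p ∈ EdgeImg f v)
    (h0 : (g p).length = 0) : EdgeImg (g ∘ f) v = {(g ∘ f) (FP.ofVertex v)} := by
  obtain ⟨e, hset, -⟩ := hv
  have hsub : (EdgeImg f v).Subsingleton := by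
    rw [EdgeImg, hset]
    exact Set.subsingleton_singleton.image _
  rw [edgeImg_comp, hsub.eq_singleton_of_mem hp, Set.image_singleton,
    hg.eq_map_ofVertex_src_of_length_eq_zero h0, hf.ofVertex_src_of_mem_edgeImg hp]
  rfl

end DirGraph

open DirGraph in
/-- Vertex-injective path homomorphisms satisfying both the monotonicity
condition on edges and the regularity condition form a subcategory: identities
are regular and the composite of regular, monotone, vertex-injective path
homomorphisms is regular. -/
theorem regular_morphisms_form_subcategory :
    (∀ G : DirGraph, RegularHom (id : G.FP → G.FP)) ∧
    (∀ (G H K : DirGraph) (f : G.FP → H.FP) (g : H.FP → K.FP),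
      IsPathHom f → VertexInjective f → EdgeMonotone f → RegularHom f →
      IsPathHom g → VertexInjective g → EdgeMonotone g → RegularHom g →
      RegularHom (g ∘ f)) := by
  refine ⟨regularHom_id, fun G H K f g hf hvf hmf hrf hg _ hmg hrg v hv => ?_⟩
  obtain ⟨hreg, hreg0⟩ := hrf v hv
  by_cases hpos : ∀ p ∈ EdgeImg f v, 0 < (g p).length
  · refine ⟨fun h0 => regCond_comp hf hg hmg hrg hv (hreg h0) hpos, fun h0 => ?_⟩
    refine (hreg0 h0).imp (regCond_comp hf hg hmg hrg hv · hpos) fun hcol => ?_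
    rw [edgeImg_comp, hcol, Set.image_singleton]
    rfl
  · obtain ⟨p, hp, hp0⟩ := not_forall₂.1 hpos
    have hlen : (g p).length = 0 := Nat.eq_zero_of_not_pos hp0
    have h0 : Reg0V G v := by
      by_contra h0
      exact h0 (reg0V_of_length_map_eq_zero hf hvf hmf hg hrg hv (hreg h0) hp hlen)
    exact ⟨absurd h0, fun h0 => Or.inr (edgeImg_comp_eq_singleton hf hg h0 hp hlen)⟩
end

section
/- Let f : FP(E) → FP(F) be a vertex-injective, monotone, regular path homomorphism between graphs. Then the map f_*^L : L_k(E) → L_k(F) on Leavitt path algebras given on generators by [χ_p] ↦ [χ_{f̄(p)}] is a well-defined k-algebra homomorphism; in particular, for every regular vertex v of E, Σ_{e ∈ s⁻¹(v)} [χ_{f̄(e)}][χ_{f̄(e)*}] = [χ_{f(v)}] holds in L_k(F). The assignment is functorial and unital when restricted to graphs with finitely many vertices and maps bijective on vertices. -/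
/-- A directed graph. -/
structure LPGraph where
  V : Type
  E : Type
  src : E → V
  tgt : E → V

namespace LPGraph

/-- Finite paths from `v` to `w` in a graph. -/
inductive Path (G : LPGraph) : G.V → G.V → Type
  | nil (v : G.V) : Path G v v
  | cons (e : G.E) {w : G.V} (p : Path G (G.tgt e) w) : Path G (G.src e) w

/-- Concatenation of composable indexed paths. -/
def Path.comp {G : LPGraph} : ∀ {a b c : G.V}, G.Path a b → G.Path b c → G.Path a c
  | _, _, _, .nil _, q => q
  | _, _, _, .cons e p, q => .cons e (p.comp q)

/-- The list of edges of a path. -/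
def Path.edges {G : LPGraph} : ∀ {a b : G.V}, G.Path a b → List G.E
  | _, _, .nil _ => []
  | _, _, .cons e p => e :: p.edges

/-- The set of all finite paths of a graph (with arbitrary endpoints). -/
def FP (G : LPGraph) : Type := Σ (v : G.V) (w : G.V), G.Path v w

/-- The source (beginning) of a finite path. -/
def FP.src {G : LPGraph} (p : G.FP) : G.V := p.1

/-- The target (end) of a finite path. -/
def FP.tgt {G : LPGraph} (p : G.FP) : G.V := p.2.1

/-- The list of edges of a finite path. -/
def FP.edges {G : LPGraph} (p : G.FP) : List G.E := p.2.2.edges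

/-- The length of a finite path. -/
def FP.length {G : LPGraph} (p : G.FP) : ℕ := p.edges.length

/-- A vertex, viewed as a length-zero finite path. -/
def FP.ofVertex {G : LPGraph} (v : G.V) : G.FP := ⟨v, v, .nil v⟩

/-- An edge, viewed as a length-one finite path. -/
def FP.ofEdge {G : LPGraph} (e : G.E) : G.FP :=
  ⟨G.src e, G.tgt e, .cons e (.nil (G.tgt e))⟩

/-- Concatenation of composable finite paths. -/
def FP.comp {G : LPGraph} (p q : G.FP) (h : p.tgt = q.src) : G.FP :=
  ⟨p.1, q.2.1, p.2.2.comp (cast (congrArg (fun x => G.Path x q.2.1) h.symm) q.2.2)⟩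

/-- The prefix (extension) relation `α ⪯ β` on finite paths: `β = αγ` for some path `γ`. -/
def FP.le {G : LPGraph} (p q : G.FP) : Prop :=
  ∃ (r : G.FP) (h : p.tgt = r.src), q = p.comp r h

/-- A path homomorphism of graphs: a map on finite paths sending vertices to
vertices, intertwining the extended source and target maps, and preserving
concatenation of composable paths. -/
def IsPathHom {G H : LPGraph} (f : G.FP → H.FP) : Prop :=
  (∀ v : G.V, ∃ w : H.V, f (FP.ofVertex v) = FP.ofVertex w) ∧
  (∀ p : G.FP, f (FP.ofVertex p.src) = FP.ofVertex (f p).src) ∧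
  (∀ p : G.FP, f (FP.ofVertex p.tgt) = FP.ofVertex (f p).tgt) ∧
  (∀ (p q : G.FP) (h : p.tgt = q.src),
    ∃ h' : (f p).tgt = (f q).src, f (p.comp q h) = (f p).comp (f q) h')

/-- A map on finite paths is vertex-injective if it is injective on vertices. -/
def VertexInjective {G H : LPGraph} (f : G.FP → H.FP) : Prop :=
  Function.Injective (fun v : G.V => f (FP.ofVertex v))

/-- The monotonicity condition on edges: `f(e) ⪯ f(e′)` implies `e = e′`. -/
def EdgeMonotone {G H : LPGraph} (f : G.FP → H.FP) : Prop :=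
  ∀ e e' : G.E, FP.le (f (FP.ofEdge e)) (f (FP.ofEdge e')) → e = e'

end LPGraph

namespace LPGraph

/-- The extended (double) graph `Ē` of `E`: same vertices, edges `E¹ ⊔ (E¹)*`,
with `s(e*) = t(e)` and `t(e*) = s(e)`. -/
def ext (G : LPGraph) : LPGraph where
  V := G.V
  E := G.E ⊕ G.E
  src := Sum.elim G.src G.tgt
  tgt := Sum.elim G.tgt G.src

/-- The canonical inclusion of paths of `E` into paths of the extended graph `Ē`. -/
def Path.inclExt {G : LPGraph} : ∀ {v w : G.V}, G.Path v w → G.ext.Path v w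
  | _, _, .nil v => Path.nil (G := G.ext) v
  | _, _, .cons e p => Path.cons (G := G.ext) (Sum.inl e) p.inclExt

/-- The star (reversal) of a path of `E`, as a path of the extended graph `Ē`:
`(e₁…eₙ)* = eₙ*…e₁*`. -/
def Path.star {G : LPGraph} : ∀ {v w : G.V}, G.Path v w → G.ext.Path w v
  | _, _, .nil v => Path.nil (G := G.ext) v
  | _, _, .cons e p =>
      Path.comp p.star (Path.cons (G := G.ext) (Sum.inr e) (Path.nil (G := G.ext) (G.src e)))

/-- The canonical inclusion `FP(E) → FP(Ē)`. -/
def FP.inclExt {G : LPGraph} (p : G.FP) : G.ext.FP := ⟨p.1, p.2.1, p.2.2.inclExt⟩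

/-- The star `p ↦ p*` of finite paths, `FP(E) → FP(Ē)`. -/
def FP.star {G : LPGraph} (p : G.FP) : G.ext.FP := ⟨p.2.1, p.1, p.2.2.star⟩

/-- `fbar` is the path homomorphism `Ē → F̄` of extended graphs induced by a
path homomorphism `f : E → F`: it is a path homomorphism agreeing with `f` on
vertices and satisfying `f̄(e) = f(e)` and `f̄(e*) = f(e)*` on the two kinds of
edges of `Ē`. -/
def IsBar {G H : LPGraph} (f : G.FP → H.FP) (fbar : G.ext.FP → H.ext.FP) : Prop :=
  IsPathHom fbar ∧
  (∀ (v : G.V) (w : H.V), f (FP.ofVertex v) = FP.ofVertex w →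
    fbar (FP.ofVertex (G := G.ext) v) = FP.ofVertex (G := H.ext) w) ∧
  (∀ e : G.E, fbar (FP.ofEdge (G := G.ext) (Sum.inl e)) = FP.inclExt (f (FP.ofEdge e))) ∧
  (∀ e : G.E, fbar (FP.ofEdge (G := G.ext) (Sum.inr e)) = FP.star (f (FP.ofEdge e)))

end LPGraph

namespace LPGraph

/-- Generators of the Cohn/Leavitt path algebra of `G`: a generator `χ_v` for
each vertex, `χ_e` and `χ_{e*}` for each edge. -/
def Gen (G : LPGraph) : Type := G.V ⊕ G.E ⊕ G.E

/-- The generator of the Cohn/Leavitt path algebra corresponding to an edge of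
the extended graph `Ḡ`. -/
def genOfExtEdge {G : LPGraph} (x : G.ext.E) : Gen G :=
  Sum.elim (fun e => Sum.inr (Sum.inl e)) (fun e => Sum.inr (Sum.inr e)) x

/-- The relations defining the Cohn path algebra as a quotient of the free
algebra on the generators `χ_v, χ_e, χ_{e*}`: the path-algebra relations
`χ_v χ_w = δ_{v,w} χ_v`, `χ_{s(e)} χ_e = χ_e = χ_e χ_{t(e)}`,
`χ_{t(e)} χ_{e*} = χ_{e*} = χ_{e*} χ_{s(e)}`, together with the first
Cuntz–Krieger relation `χ_{e*} χ_f = δ_{e,f} χ_{t(e)}`. -/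
inductive CohnRel (k : Type) [Field k] (G : LPGraph) :
    FreeAlgebra k (Gen G) → FreeAlgebra k (Gen G) → Prop
  | vtx (v w : G.V) [Decidable (v = w)] :
      CohnRel k G (FreeAlgebra.ι k (Sum.inl v) * FreeAlgebra.ι k (Sum.inl w))
        (if v = w then FreeAlgebra.ι k (Sum.inl v) else 0)
  | src_edge (e : G.E) :
      CohnRel k G (FreeAlgebra.ι k (Sum.inl (G.src e)) * FreeAlgebra.ι k (Sum.inr (Sum.inl e)))
        (FreeAlgebra.ι k (Sum.inr (Sum.inl e)))
  | edge_tgt (e : G.E) :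
      CohnRel k G (FreeAlgebra.ι k (Sum.inr (Sum.inl e)) * FreeAlgebra.ι k (Sum.inl (G.tgt e)))
        (FreeAlgebra.ι k (Sum.inr (Sum.inl e)))
  | tgt_star (e : G.E) :
      CohnRel k G (FreeAlgebra.ι k (Sum.inl (G.tgt e)) * FreeAlgebra.ι k (Sum.inr (Sum.inr e)))
        (FreeAlgebra.ι k (Sum.inr (Sum.inr e)))
  | star_src (e : G.E) :
      CohnRel k G (FreeAlgebra.ι k (Sum.inr (Sum.inr e)) * FreeAlgebra.ι k (Sum.inl (G.src e)))
        (FreeAlgebra.ι k (Sum.inr (Sum.inr e)))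
  | cohn (e f : G.E) [Decidable (e = f)] :
      CohnRel k G (FreeAlgebra.ι k (Sum.inr (Sum.inr e)) * FreeAlgebra.ι k (Sum.inr (Sum.inl f)))
        (if e = f then FreeAlgebra.ι k (Sum.inl (G.tgt e)) else 0)

/-- The Cohn path algebra `C_k(G)`. -/
def CohnAlg (k : Type) [Field k] (G : LPGraph) : Type := RingQuot (CohnRel k G)

noncomputable instance (k : Type) [Field k] (G : LPGraph) : Ring (CohnAlg k G) :=
  inferInstanceAs (Ring (RingQuot (CohnRel k G)))

noncomputable instance (k : Type) [Field k] (G : LPGraph) : Algebra k (CohnAlg k G) :=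
  inferInstanceAs (Algebra k (RingQuot (CohnRel k G)))

/-- The element of the free algebra on the generators given by a finite path of
the extended graph: `χ_v` for the length-zero path at `v`, and the product
`χ_{x₁} ⋯ χ_{xₙ}` for a path `x₁…xₙ` of positive length. -/
noncomputable def freeOfFP (k : Type) [Field k] {G : LPGraph} (p : G.ext.FP) :
    FreeAlgebra k (Gen G) :=
  if p.edges.isEmpty then FreeAlgebra.ι k (Sum.inl (p.src : G.V))
  else (p.edges.map fun x => FreeAlgebra.ι k (genOfExtEdge x)).prod

/-- The class `[χ_p]` in the Cohn path algebra of a finite path `p` of the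
extended graph. -/
noncomputable def cohnPathElem (k : Type) [Field k] {G : LPGraph} (p : G.ext.FP) :
    CohnAlg k G :=
  RingQuot.mkAlgHom k (CohnRel k G) (freeOfFP k p)

end LPGraph

namespace LPGraph

/-- A vertex is regular if it emits at least one and only finitely many edges. -/
def RegularV (G : LPGraph) (v : G.V) : Prop :=
  {e : G.E | G.src e = v}.Finite ∧ {e : G.E | G.src e = v}.Nonempty

/-- A vertex is 0-regular if it emits exactly one edge and that edge is a loop
at the vertex. -/
def Reg0V (G : LPGraph) (v : G.V) : Prop :=
  ∃ e : G.E, {x : G.E | G.src x = v} = {e} ∧ G.tgt e = v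

/-- The image `f(s⁻¹(v))` of the set of edges emitted from `v`. -/
def EdgeImg {G H : LPGraph} (f : G.FP → H.FP) (v : G.V) : Set H.FP :=
  (fun e => f (FP.ofEdge e)) '' {e : G.E | G.src e = v}

/-- The regularity condition at a vertex `v`: `f` is injective on `s⁻¹(v)`, and
`p ∈ f(s⁻¹(v))` if and only if (i) `p` is a path of positive length, (ii) any
extension `pq ∈ f(s⁻¹(v))` has `q` trivial, and (iii) for every `i` and every
edge `x` with the same source as the `i`-th edge of `p`, some element of
`f(s⁻¹(v))` extends `e₁…e_{i−1}x`. -/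
def RegCond {G H : LPGraph} (f : G.FP → H.FP) (v : G.V) : Prop :=
  Set.InjOn (fun e => f (FP.ofEdge e)) {e : G.E | G.src e = v} ∧
  ∀ p : H.FP, p ∈ EdgeImg f v ↔
    (0 < p.length ∧
     (∀ (q : H.FP) (h : p.tgt = q.src),
        FP.comp p q h ∈ EdgeImg f v → q = FP.ofVertex p.tgt) ∧
     (∀ (i : ℕ) (hi : i < p.length) (x : H.E),
        H.src x = H.src (p.edges.get ⟨i, hi⟩) →
        ∃ q ∈ EdgeImg f v, (p.edges.take i ++ [x]) <+: q.edges))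

/-- A path homomorphism is regular if the regularity condition holds at every
regular vertex which is not 0-regular, and at every 0-regular vertex either the
regularity condition holds or `f(s⁻¹(v)) = {f(v)}`. -/
def RegularHom {G H : LPGraph} (f : G.FP → H.FP) : Prop :=
  ∀ v : G.V, RegularV G v →
    ((¬ Reg0V G v → RegCond f v) ∧
     (Reg0V G v → (RegCond f v ∨ EdgeImg f v = {f (FP.ofVertex v)})))

end LPGraph

namespace LPGraph

/-- The relations defining the Leavitt path algebra: the Cohn relations
together with the second Cuntz–Krieger relation
`Σ_{e ∈ s⁻¹(v)} χ_e χ_{e*} = χ_v` for every regular vertex `v`. -/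
def LeavittRel (k : Type) [Field k] (G : LPGraph)
    (a b : FreeAlgebra k (Gen G)) : Prop :=
  CohnRel k G a b ∨
    ∃ (v : G.V) (h : {e : G.E | G.src e = v}.Finite),
      {e : G.E | G.src e = v}.Nonempty ∧
      a = ∑ e ∈ h.toFinset,
            FreeAlgebra.ι k (Sum.inr (Sum.inl e)) * FreeAlgebra.ι k (Sum.inr (Sum.inr e)) ∧
      b = FreeAlgebra.ι k (Sum.inl v)

/-- The Leavitt path algebra `L_k(G)`. -/
def LeavittAlg (k : Type) [Field k] (G : LPGraph) : Type := RingQuot (LeavittRel k G)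

noncomputable instance (k : Type) [Field k] (G : LPGraph) : Ring (LeavittAlg k G) :=
  inferInstanceAs (Ring (RingQuot (LeavittRel k G)))

noncomputable instance (k : Type) [Field k] (G : LPGraph) : Algebra k (LeavittAlg k G) :=
  inferInstanceAs (Algebra k (RingQuot (LeavittRel k G)))

/-- The class `[χ_p]` in the Leavitt path algebra of a finite path `p` of the
extended graph. -/
noncomputable def leavittPathElem (k : Type) [Field k] {G : LPGraph} (p : G.ext.FP) :
    LeavittAlg k G :=
  RingQuot.mkAlgHom k (LeavittRel k G) (freeOfFP k p)

end LPGraph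

/-!
The map is defined on generators, `χ_v ↦ χ_{f(v)}`, `χ_e ↦ [χ_{f(e)}]`, `χ_{e*} ↦ [χ_{f(e)*}]`,
and the work is to check the Leavitt relations for these images in `L_k(F)`. The path-algebra
relations say that a path is absorbed by its end vertices, and `χ_v χ_w = 0` for `v ≠ w` uses
vertex-injectivity. The first Cuntz–Krieger relation follows from `[χ_{p*}][χ_p] = χ_{t(p)}` and
`[χ_{p*}][χ_q] = 0` for paths incomparable under `⪯`; monotonicity makes `f(e)`, `f(e')`
incomparable for `e ≠ e'`. For the second, regularity makes the edge lists of `f(s⁻¹(v))` a finite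
exhaustive set of paths from `f(v)`, prefix-free by monotonicity, and for any such set `T` we have
`Σ_{p ∈ T} χ_p χ_{p*} = χ_{f(v)}`: grouping `T` by first edge `x`, the tails form such a set at
`t(x)`, so by induction the group of `x` sums to `χ_x χ_{x*}`, and the Cuntz–Krieger relation at
`f(v)` adds these up. Uniqueness holds because the path classes include the generators.
-/

theorem Finset.sum_eq_sum_sum_preimage_cons {α M : Type*} [DecidableEq α] [AddCommMonoid M]
    {S : Finset (List α)} {A : Finset α} (hS : ∀ l ∈ S, ∃ x ∈ A, l.head? = some x)
    (F : List α → M) :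
    ∑ l ∈ S, F l = ∑ x ∈ A, ∑ t ∈ S.preimage (x :: ·) List.cons_injective.injOn, F (x :: t) := by
  have hmaps : ∀ l ∈ S, l.head? ∈ A.map .some := by
    intro l hl
    obtain ⟨x, hx, hlx⟩ := hS l hl
    exact hlx ▸ Finset.mem_map_of_mem _ hx
  rw [← Finset.sum_fiberwise_of_maps_to hmaps, Finset.sum_map]
  refine Finset.sum_congr rfl fun x _ => ?_
  classical
  rw [Finset.sum_preimage']
  refine Finset.sum_congr (Finset.filter_congr fun l _ => ?_) fun _ _ => rfl
  simp [List.head?_eq_some_iff, eq_comm]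

namespace LPGraph

-- `⟨a, b, p⟩ : K.FP` elaborates to a bare sigma type, which `rw` does not identify with `K.FP`.
def Path.toFP {K : LPGraph} {a b : K.V} (p : K.Path a b) : K.FP := ⟨a, b, p⟩

theorem Path.toFP_le_of_prefix {K : LPGraph} {a b : K.V} (p : K.Path a b) :
    ∀ q : K.FP, a = q.src → p.edges <+: q.edges → p.toFP.le q := by
  induction p with
  | nil a =>
    rintro ⟨_, d, q⟩ rfl -
    exact ⟨⟨a, d, q⟩, rfl, rfl⟩
  | cons e p ih =>
    rintro ⟨_, d, _ | ⟨e', q⟩⟩ - h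
    · exact absurd h.length_le (by simp [FP.edges, Path.edges])
    · obtain ⟨rfl, h⟩ := List.cons_prefix_cons.1 h
      obtain ⟨⟨_, d', r⟩, hb, heq⟩ := ih ⟨_, d, q⟩ rfl h
      cases hb
      cases heq
      exact ⟨⟨_, d', r⟩, rfl, rfl⟩

noncomputable def leavittMk (k : Type) [Field k] (H : LPGraph) :
    FreeAlgebra k (Gen H) →ₐ[k] LeavittAlg k H :=
  RingQuot.mkAlgHom k (LeavittRel k H)

noncomputable def vertexGen (k : Type) [Field k] (H : LPGraph) (v : H.V) : LeavittAlg k H :=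
  leavittMk k H (FreeAlgebra.ι k (Sum.inl v))

noncomputable def edgeGen (k : Type) [Field k] (H : LPGraph) (e : H.E) : LeavittAlg k H :=
  leavittMk k H (FreeAlgebra.ι k (Sum.inr (Sum.inl e)))

noncomputable def ghostGen (k : Type) [Field k] (H : LPGraph) (e : H.E) : LeavittAlg k H :=
  leavittMk k H (FreeAlgebra.ι k (Sum.inr (Sum.inr e)))

noncomputable def extGen (k : Type) [Field k] (H : LPGraph) (x : H.ext.E) : LeavittAlg k H :=
  Sum.elim (edgeGen k H) (ghostGen k H) x

section Generators

variable {k : Type} [Field k] {H : LPGraph}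

theorem mul_eq_of_cohnRel {a a' b : FreeAlgebra k (Gen H)} (h : CohnRel k H (a * a') b) :
    leavittMk k H a * leavittMk k H a' = leavittMk k H b :=
  (map_mul (leavittMk k H) _ _).symm.trans (RingQuot.mkAlgHom_rel k (Or.inl h))

theorem vertexGen_mul_self (v : H.V) : vertexGen k H v * vertexGen k H v = vertexGen k H v := by
  classical
  have h := mul_eq_of_cohnRel (CohnRel.vtx (k := k) v v)
  rwa [if_pos rfl] at h

theorem vertexGen_mul_of_ne {v w : H.V} (h : v ≠ w) : vertexGen k H v * vertexGen k H w = 0 := by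
  classical
  have h' := mul_eq_of_cohnRel (CohnRel.vtx (k := k) v w)
  rwa [if_neg h, map_zero] at h'

theorem vertexGen_src_mul_edgeGen (e : H.E) :
    vertexGen k H (H.src e) * edgeGen k H e = edgeGen k H e :=
  mul_eq_of_cohnRel (CohnRel.src_edge e)

theorem edgeGen_mul_vertexGen_tgt (e : H.E) :
    edgeGen k H e * vertexGen k H (H.tgt e) = edgeGen k H e :=
  mul_eq_of_cohnRel (CohnRel.edge_tgt e)

theorem vertexGen_tgt_mul_ghostGen (e : H.E) :
    vertexGen k H (H.tgt e) * ghostGen k H e = ghostGen k H e :=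
  mul_eq_of_cohnRel (CohnRel.tgt_star e)

theorem ghostGen_mul_vertexGen_src (e : H.E) :
    ghostGen k H e * vertexGen k H (H.src e) = ghostGen k H e :=
  mul_eq_of_cohnRel (CohnRel.star_src e)

theorem ghostGen_mul_edgeGen_self (e : H.E) :
    ghostGen k H e * edgeGen k H e = vertexGen k H (H.tgt e) := by
  classical
  have h := mul_eq_of_cohnRel (CohnRel.cohn (k := k) e e)
  rwa [if_pos rfl] at h

theorem ghostGen_mul_edgeGen_of_ne {e f : H.E} (h : e ≠ f) :
    ghostGen k H e * edgeGen k H f = 0 := by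
  classical
  have h' := mul_eq_of_cohnRel (CohnRel.cohn (k := k) e f)
  rwa [if_neg h, map_zero] at h'

theorem sum_edgeGen_mul_ghostGen (v : H.V) (hfin : {e : H.E | H.src e = v}.Finite)
    (hne : {e : H.E | H.src e = v}.Nonempty) :
    ∑ e ∈ hfin.toFinset, edgeGen k H e * ghostGen k H e = vertexGen k H v := by
  simp only [edgeGen, ghostGen, vertexGen, ← map_mul, ← map_sum]
  exact RingQuot.mkAlgHom_rel k (Or.inr ⟨v, hfin, hne, rfl, rfl⟩)

theorem vertexGen_src_mul_extGen (x : H.ext.E) :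
    vertexGen k H (H.ext.src x) * extGen k H x = extGen k H x := by
  rcases x with e | e
  · exact vertexGen_src_mul_edgeGen e
  · exact vertexGen_tgt_mul_ghostGen e

theorem extGen_mul_vertexGen_tgt (x : H.ext.E) :
    extGen k H x * vertexGen k H (H.ext.tgt x) = extGen k H x := by
  rcases x with e | e
  · exact edgeGen_mul_vertexGen_tgt e
  · exact ghostGen_mul_vertexGen_src e

end Generators

noncomputable def Path.leavittElem (k : Type) [Field k] {H : LPGraph} :
    ∀ {a b : H.ext.V}, H.ext.Path a b → LeavittAlg k H
  | _, _, .nil v => vertexGen k H v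
  | _, _, .cons x p => extGen k H x * p.leavittElem k

/-- `rangeProj k H w l` is `χ_p χ_{p*}` for the path `p` from `w` with edge list `l`. -/
noncomputable def rangeProj (k : Type) [Field k] (H : LPGraph) : H.V → List H.E → LeavittAlg k H
  | w, [] => vertexGen k H w
  | _, x :: l => edgeGen k H x * rangeProj k H (H.tgt x) l * ghostGen k H x

section PathElements

variable {k : Type} [Field k] {H : LPGraph}

namespace Path

theorem vertexGen_mul_leavittElem {a b : H.ext.V} (p : H.ext.Path a b) :
    vertexGen k H a * p.leavittElem k = p.leavittElem k := by
  cases p with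
  | nil => exact vertexGen_mul_self _
  | cons x p => rw [leavittElem, ← mul_assoc, vertexGen_src_mul_extGen]

theorem leavittElem_mul_vertexGen {a b : H.ext.V} (p : H.ext.Path a b) :
    p.leavittElem k * vertexGen k H b = p.leavittElem k := by
  induction p with
  | nil => exact vertexGen_mul_self _
  | cons x p ih => rw [leavittElem, mul_assoc, ih]

theorem leavittElem_comp {a b c : H.ext.V} (p : H.ext.Path a b) (q : H.ext.Path b c) :
    (p.comp q).leavittElem k = p.leavittElem k * q.leavittElem k := by
  induction p with
  | nil => exact (vertexGen_mul_leavittElem q).symm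
  | cons x p ih => rw [comp, leavittElem, leavittElem, ih, mul_assoc]

theorem leavittElem_eq_vertexGen_mul_prod {a b : H.ext.V} (p : H.ext.Path a b) :
    p.leavittElem k = vertexGen k H a * (p.edges.map (extGen k H)).prod := by
  induction p with
  | nil => exact (mul_one _).symm
  | cons x p ih =>
    rw [leavittElem, ih, edges, List.map_cons, List.prod_cons, ← mul_assoc,
      extGen_mul_vertexGen_tgt, ← mul_assoc, vertexGen_src_mul_extGen]

end Path

theorem leavittMk_ι_genOfExtEdge (x : H.ext.E) :
    leavittMk k H (FreeAlgebra.ι k (genOfExtEdge x)) = extGen k H x := by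
  rcases x with e | e <;> rfl

theorem leavittPathElem_mk {a b : H.ext.V} (p : H.ext.Path a b) :
    leavittPathElem k p.toFP = p.leavittElem k := by
  cases p with
  | nil => rfl
  | cons x p =>
    change leavittMk k H ((x :: p.edges).map fun y => FreeAlgebra.ι k (genOfExtEdge y)).prod = _
    have hgen : (leavittMk k H ∘ fun y => FreeAlgebra.ι k (genOfExtEdge y)) = extGen k H :=
      funext leavittMk_ι_genOfExtEdge
    rw [Path.leavittElem_eq_vertexGen_mul_prod, map_list_prod, List.map_map, hgen, Path.edges,
      List.map_cons, List.prod_cons, ← mul_assoc, vertexGen_src_mul_extGen]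

theorem leavittPathElem_ofEdge (x : H.ext.E) :
    leavittPathElem k (FP.ofEdge x) = extGen k H x :=
  (leavittPathElem_mk _).trans (extGen_mul_vertexGen_tgt x)

theorem leavittPathElem_comp (p q : H.ext.FP) (h : p.tgt = q.src) :
    leavittPathElem k (p.comp q h) = leavittPathElem k p * leavittPathElem k q := by
  obtain ⟨a, b, p⟩ := p
  obtain ⟨_, c, q⟩ := q
  cases h
  change leavittPathElem k (p.comp q).toFP = leavittPathElem k p.toFP * leavittPathElem k q.toFP
  rw [leavittPathElem_mk, leavittPathElem_mk, leavittPathElem_mk, Path.leavittElem_comp]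

theorem vertexGen_mul_leavittPathElem (p : H.ext.FP) :
    vertexGen k H p.src * leavittPathElem k p = leavittPathElem k p := by
  obtain ⟨a, b, p⟩ := p
  change vertexGen k H a * leavittPathElem k p.toFP = leavittPathElem k p.toFP
  rw [leavittPathElem_mk]
  exact p.vertexGen_mul_leavittElem

theorem leavittPathElem_mul_vertexGen (p : H.ext.FP) :
    leavittPathElem k p * vertexGen k H p.tgt = leavittPathElem k p := by
  obtain ⟨a, b, p⟩ := p
  change leavittPathElem k p.toFP * vertexGen k H b = leavittPathElem k p.toFP
  rw [leavittPathElem_mk]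
  exact p.leavittElem_mul_vertexGen

namespace Path

theorem leavittPathElem_inclExt_cons (e : H.E) {b : H.V} (p : H.Path (H.tgt e) b) :
    leavittPathElem k (cons e p).toFP.inclExt = edgeGen k H e * leavittPathElem k p.toFP.inclExt :=
  (leavittPathElem_comp (FP.ofEdge (G := H.ext) (.inl e)) p.toFP.inclExt rfl).trans
    (congrArg (· * _) (leavittPathElem_ofEdge _))

theorem leavittPathElem_star_cons (e : H.E) {b : H.V} (p : H.Path (H.tgt e) b) :
    leavittPathElem k (cons e p).toFP.star = leavittPathElem k p.toFP.star * ghostGen k H e :=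
  (leavittPathElem_comp p.toFP.star (FP.ofEdge (G := H.ext) (.inr e)) rfl).trans
    (congrArg (_ * ·) (leavittPathElem_ofEdge _))

theorem vertexGen_mul_leavittPathElem_inclExt {a b : H.V} (p : H.Path a b) :
    vertexGen k H a * leavittPathElem k p.toFP.inclExt = leavittPathElem k p.toFP.inclExt :=
  vertexGen_mul_leavittPathElem p.toFP.inclExt

theorem leavittPathElem_star_mul_vertexGen {a b : H.V} (p : H.Path a b) :
    leavittPathElem k p.toFP.star * vertexGen k H a = leavittPathElem k p.toFP.star :=
  leavittPathElem_mul_vertexGen p.toFP.star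

theorem leavittPathElem_star_mul_inclExt {a b : H.V} (p : H.Path a b) :
    leavittPathElem k p.toFP.star * leavittPathElem k p.toFP.inclExt = vertexGen k H b := by
  induction p with
  | nil => exact vertexGen_mul_self _
  | cons e p ih =>
    rw [leavittPathElem_star_cons, leavittPathElem_inclExt_cons, mul_assoc,
      ← mul_assoc (ghostGen k H e), ghostGen_mul_edgeGen_self,
      vertexGen_mul_leavittPathElem_inclExt, ih]

theorem leavittPathElem_star_mul_inclExt_eq_zero_of_not_prefix {a b a' d : H.V} (p : H.Path a b)
    (q : H.Path a' d) (hpq : ¬ p.edges <+: q.edges) (hqp : ¬ q.edges <+: p.edges) :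
    leavittPathElem k p.toFP.star * leavittPathElem k q.toFP.inclExt = 0 := by
  induction p generalizing a' q with
  | nil => exact absurd List.nil_prefix hpq
  | cons e p ih =>
    cases q with
    | nil => exact absurd List.nil_prefix hqp
    | cons e' q =>
      rw [leavittPathElem_star_cons, leavittPathElem_inclExt_cons, mul_assoc,
        ← mul_assoc (ghostGen k H e)]
      by_cases he : e = e'
      · subst he
        rw [ghostGen_mul_edgeGen_self, vertexGen_mul_leavittPathElem_inclExt]
        exact ih q (fun h => hpq (List.cons_prefix_cons.2 ⟨rfl, h⟩))
          (fun h => hqp (List.cons_prefix_cons.2 ⟨rfl, h⟩))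
      · rw [ghostGen_mul_edgeGen_of_ne he, zero_mul, mul_zero]

theorem leavittPathElem_inclExt_mul_star {a b : H.V} (p : H.Path a b) :
    leavittPathElem k p.toFP.inclExt * leavittPathElem k p.toFP.star = rangeProj k H a p.edges := by
  induction p with
  | nil => exact vertexGen_mul_self _
  | cons e p ih =>
    rw [leavittPathElem_star_cons, leavittPathElem_inclExt_cons, edges, rangeProj, ← ih]
    simp only [mul_assoc]

end Path

theorem leavittPathElem_star_mul_inclExt (q : H.FP) :
    leavittPathElem k q.star * leavittPathElem k q.inclExt = vertexGen k H q.tgt :=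
  q.2.2.leavittPathElem_star_mul_inclExt

theorem leavittPathElem_star_mul_inclExt_eq_zero_of_not_le {q q' : H.FP} (h : ¬ q.le q')
    (h' : ¬ q'.le q) :
    leavittPathElem k q.star * leavittPathElem k q'.inclExt = 0 := by
  obtain ⟨a, b, p⟩ := q
  obtain ⟨a', d, p'⟩ := q'
  by_cases ha : a = a'
  · subst ha
    exact p.leavittPathElem_star_mul_inclExt_eq_zero_of_not_prefix p'
      (fun hp => h (p.toFP_le_of_prefix _ rfl hp)) (fun hp => h' (p'.toFP_le_of_prefix _ rfl hp))
  · change leavittPathElem k p.toFP.star * leavittPathElem k p'.toFP.inclExt = 0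
    rw [← p.leavittPathElem_star_mul_vertexGen, ← p'.vertexGen_mul_leavittPathElem_inclExt,
      mul_assoc, ← mul_assoc (vertexGen k H a), vertexGen_mul_of_ne ha, zero_mul, mul_zero]

theorem leavittPathElem_inclExt_mul_star (q : H.FP) :
    leavittPathElem k q.inclExt * leavittPathElem k q.star = rangeProj k H q.src q.edges :=
  q.2.2.leavittPathElem_inclExt_mul_star

theorem LeavittAlg.algHom_ext {A : Type*} [Semiring A] [Algebra k A]
    {φ ψ : LeavittAlg k H →ₐ[k] A}
    (h : ∀ p : H.ext.FP, φ (leavittPathElem k p) = ψ (leavittPathElem k p)) : φ = ψ := by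
  have hext : ∀ x : H.ext.E, φ (extGen k H x) = ψ (extGen k H x) := fun x => by
    simpa only [leavittPathElem_ofEdge] using h (FP.ofEdge x)
  refine RingQuot.ringQuot_ext' _ _ _ (FreeAlgebra.hom_ext (funext fun g => ?_))
  rcases g with v | e | e
  · exact h (FP.ofVertex v)
  · exact hext (.inl e)
  · exact hext (.inr e)

end PathElements

def IsPathFrom (H : LPGraph) : H.V → List H.E → Prop
  | _, [] => True
  | w, x :: l => H.src x = w ∧ IsPathFrom H (H.tgt x) l

theorem Path.isPathFrom_edges {H : LPGraph} {a b : H.V} (p : H.Path a b) :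
    IsPathFrom H a p.edges := by
  induction p with
  | nil => trivial
  | cons e p ih => exact ⟨rfl, ih⟩

-- The conditions of `RegCond` on edge lists, except that `{[]}` is allowed: it arises from
-- `f(s⁻¹(v)) = {f(v)}` at a 0-regular vertex, and as the base case of the induction below.
structure IsExhaustivePrefixFree (H : LPGraph) (w : H.V) (S : Finset (List H.E)) : Prop where
  nonempty : S.Nonempty
  isPathFrom : ∀ l ∈ S, IsPathFrom H w l
  prefixFree : ∀ l ∈ S, ∀ l' ∈ S, l <+: l' → l = l'
  exhaustive : ∀ l ∈ S, ∀ (i : ℕ) (hi : i < l.length) (x : H.E), H.src x = H.src l[i] →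
    ∃ l' ∈ S, l.take i ++ [x] <+: l'

namespace IsExhaustivePrefixFree

variable {H : LPGraph} {w : H.V} {S : Finset (List H.E)}

theorem eq_singleton_nil (hS : IsExhaustivePrefixFree H w S) (hnil : [] ∈ S) : S = {[]} :=
  Finset.eq_singleton_iff_unique_mem.2
    ⟨hnil, fun l hl => (hS.prefixFree [] hnil l hl List.nil_prefix).symm⟩

theorem exists_cons_mem (hS : IsExhaustivePrefixFree H w S) (hnil : [] ∉ S) {x : H.E}
    (hx : H.src x = w) : ∃ t, x :: t ∈ S := by
  obtain ⟨l, hl⟩ := hS.nonempty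
  obtain ⟨y, l, rfl⟩ := List.exists_cons_of_ne_nil (ne_of_mem_of_not_mem hl hnil)
  obtain ⟨l', hl', hpre⟩ :=
    hS.exhaustive _ hl 0 (Nat.succ_pos _) x (hx.trans (hS.isPathFrom _ hl).1.symm)
  obtain ⟨t, rfl, -⟩ := List.cons_prefix_iff.1 hpre
  exact ⟨t, hl'⟩

theorem finite_edges (hS : IsExhaustivePrefixFree H w S) (hnil : [] ∉ S) :
    {x : H.E | H.src x = w}.Finite := by
  classical
  refine ((S.image List.head?).finite_toSet.preimage (Option.some_injective _).injOn).subset ?_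
  intro x hx
  obtain ⟨t, ht⟩ := hS.exists_cons_mem hnil hx
  exact Finset.mem_image.2 ⟨_, ht, rfl⟩

theorem exists_head_mem (hS : IsExhaustivePrefixFree H w S) (hnil : [] ∉ S) :
    ∀ l ∈ S, ∃ x ∈ (hS.finite_edges hnil).toFinset, l.head? = some x := by
  intro l hl
  obtain ⟨x, t, rfl⟩ := List.exists_cons_of_ne_nil (ne_of_mem_of_not_mem hl hnil)
  exact ⟨x, (hS.finite_edges hnil).mem_toFinset.2 (hS.isPathFrom _ hl).1, rfl⟩

theorem nonempty_edges (hS : IsExhaustivePrefixFree H w S) (hnil : [] ∉ S) :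
    {x : H.E | H.src x = w}.Nonempty := by
  obtain ⟨l, hl⟩ := hS.nonempty
  obtain ⟨x, hx, -⟩ := hS.exists_head_mem hnil l hl
  exact ⟨x, (hS.finite_edges hnil).mem_toFinset.1 hx⟩

theorem tails (hS : IsExhaustivePrefixFree H w S) (hnil : [] ∉ S) {x : H.E} (hx : H.src x = w) :
    IsExhaustivePrefixFree H (H.tgt x) (S.preimage (x :: ·) List.cons_injective.injOn) where
  nonempty := (hS.exists_cons_mem hnil hx).imp fun _ ht => Finset.mem_preimage.2 ht
  isPathFrom t ht := (hS.isPathFrom _ (Finset.mem_preimage.1 ht)).2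
  prefixFree t ht t' ht' h := List.cons_injective <| hS.prefixFree _ (Finset.mem_preimage.1 ht) _
    (Finset.mem_preimage.1 ht') (List.cons_prefix_cons.2 ⟨rfl, h⟩)
  exhaustive t ht i hi y hy := by
    obtain ⟨l', hl', hpre⟩ :=
      hS.exhaustive _ (Finset.mem_preimage.1 ht) (i + 1) (Nat.succ_lt_succ hi) y hy
    rw [List.take_succ_cons, List.cons_append, List.cons_prefix_iff] at hpre
    obtain ⟨t', rfl, hpre⟩ := hpre
    exact ⟨t', Finset.mem_preimage.2 hl', hpre⟩

variable {k : Type} [Field k]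

theorem sum_rangeProj_of_nil_mem (hS : IsExhaustivePrefixFree H w S) (hnil : [] ∈ S) :
    ∑ l ∈ S, rangeProj k H w l = vertexGen k H w := by
  rw [hS.eq_singleton_nil hnil, Finset.sum_singleton, rangeProj]

theorem sum_rangeProj_of_length_le (n : ℕ) :
    ∀ (w : H.V) (S : Finset (List H.E)), IsExhaustivePrefixFree H w S →
      (∀ l ∈ S, l.length ≤ n) → ∑ l ∈ S, rangeProj k H w l = vertexGen k H w := by
  induction n with
  | zero =>
    intro w S hS hlen
    obtain ⟨l, hl⟩ := hS.nonempty
    exact hS.sum_rangeProj_of_nil_mem (List.length_eq_zero_iff.1 (Nat.le_zero.1 (hlen l hl)) ▸ hl)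
  | succ n ih =>
    intro w S hS hlen
    by_cases hnil : [] ∈ S
    · exact hS.sum_rangeProj_of_nil_mem hnil
    have hfin := hS.finite_edges hnil
    classical
    rw [Finset.sum_eq_sum_sum_preimage_cons (hS.exists_head_mem hnil),
      ← sum_edgeGen_mul_ghostGen w hfin (hS.nonempty_edges hnil)]
    refine Finset.sum_congr rfl fun x hx => ?_
    have hx : H.src x = w := hfin.mem_toFinset.1 hx
    simp only [rangeProj, ← Finset.mul_sum, ← Finset.sum_mul]
    rw [ih _ _ (hS.tails hnil hx) fun t ht =>
        Nat.le_of_succ_le_succ (hlen _ (Finset.mem_preimage.1 ht)),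
      edgeGen_mul_vertexGen_tgt]

theorem sum_rangeProj (hS : IsExhaustivePrefixFree H w S) :
    ∑ l ∈ S, rangeProj k H w l = vertexGen k H w :=
  sum_rangeProj_of_length_le _ w S hS fun _ hl => Finset.le_sup (f := List.length) hl

end IsExhaustivePrefixFree

def vertexMap {G H : LPGraph} (f : G.FP → H.FP) (v : G.V) : H.V := (f (FP.ofVertex v)).src

section PathHom

variable {G H : LPGraph} {f : G.FP → H.FP}

theorem IsPathHom.map_ofVertex (hf : IsPathHom f) (v : G.V) :
    f (FP.ofVertex v) = FP.ofVertex (vertexMap f v) := by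
  obtain ⟨w, hw⟩ := hf.1 v
  rw [vertexMap, hw]
  rfl

theorem IsPathHom.src_map_ofEdge (hf : IsPathHom f) (e : G.E) :
    (f (FP.ofEdge e)).src = vertexMap f (G.src e) := by
  rw [vertexMap, show G.src e = (FP.ofEdge e).src from rfl, hf.2.1]
  rfl

theorem IsPathHom.tgt_map_ofEdge (hf : IsPathHom f) (e : G.E) :
    (f (FP.ofEdge e)).tgt = vertexMap f (G.tgt e) := by
  rw [vertexMap, show G.tgt e = (FP.ofEdge e).tgt from rfl, hf.2.2.1]
  rfl

theorem IsPathHom.vertexMap_injective (hf : IsPathHom f) (hvi : VertexInjective f) :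
    Function.Injective (vertexMap f) := fun v v' h =>
  hvi (show f (FP.ofVertex v) = f (FP.ofVertex v') by rw [hf.map_ofVertex, hf.map_ofVertex, h])

theorem IsPathHom.vertexMap_surjective (hf : IsPathHom f)
    (hsurj : ∀ w : H.V, ∃ v : G.V, f (FP.ofVertex v) = FP.ofVertex w) :
    Function.Surjective (vertexMap f) := by
  intro w
  obtain ⟨v, hv⟩ := hsurj w
  exact ⟨v, congrArg FP.src ((hf.map_ofVertex v).symm.trans hv)⟩

theorem EdgeMonotone.eq_of_prefix (hmono : EdgeMonotone f) {e e' : G.E}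
    (hs : (f (FP.ofEdge e)).src = (f (FP.ofEdge e')).src)
    (h : (f (FP.ofEdge e)).edges <+: (f (FP.ofEdge e')).edges) : e = e' :=
  hmono e e' ((f (FP.ofEdge e)).2.2.toFP_le_of_prefix _ hs h)

theorem RegularHom.exhaustive (hf : IsPathHom f) (hreg : RegularHom f) {v : G.V}
    (hv : RegularV G v) :
    ∀ p ∈ EdgeImg f v, ∀ (i : ℕ) (hi : i < p.length) (x : H.E),
      H.src x = H.src (p.edges.get ⟨i, hi⟩) →
      ∃ q ∈ EdgeImg f v, (p.edges.take i ++ [x]) <+: q.edges := by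
  have hcond : RegCond f v ∨ EdgeImg f v = {f (FP.ofVertex v)} := by
    by_cases h0 : Reg0V G v
    · exact (hreg v hv).2 h0
    · exact Or.inl ((hreg v hv).1 h0)
  rcases hcond with ⟨-, hiff⟩ | hsing
  · exact fun p hp => ((hiff p).1 hp).2.2
  · intro p hp i hi
    rw [hsing, Set.mem_singleton_iff, hf.map_ofVertex] at hp
    subst hp
    exact absurd hi (Nat.not_lt_zero _)

theorem isExhaustivePrefixFree_edgeImage [DecidableEq H.E] (hf : IsPathHom f)
    (hmono : EdgeMonotone f) (hreg : RegularHom f) {v : G.V} (hv : RegularV G v) :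
    IsExhaustivePrefixFree H (vertexMap f v)
      (hv.1.toFinset.image fun e => (f (FP.ofEdge e)).edges) := by
  have hsrc : ∀ e ∈ hv.1.toFinset, (f (FP.ofEdge e)).src = vertexMap f v := fun e he =>
    (hf.src_map_ofEdge e).trans (congrArg _ (hv.1.mem_toFinset.1 he))
  refine ⟨(hv.1.toFinset_nonempty.2 hv.2).image _, ?_, ?_, ?_⟩
  · rintro _ hl
    obtain ⟨e, he, rfl⟩ := Finset.mem_image.1 hl
    exact hsrc e he ▸ (f (FP.ofEdge e)).2.2.isPathFrom_edges
  · rintro _ hl _ hl' h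
    obtain ⟨e, he, rfl⟩ := Finset.mem_image.1 hl
    obtain ⟨e', he', rfl⟩ := Finset.mem_image.1 hl'
    rw [hmono.eq_of_prefix ((hsrc e he).trans (hsrc e' he').symm) h]
  · rintro _ hl i hi x hx
    obtain ⟨e, he, rfl⟩ := Finset.mem_image.1 hl
    obtain ⟨_, ⟨e', he', rfl⟩, hpre⟩ :=
      hreg.exhaustive hf hv _ ⟨e, hv.1.mem_toFinset.1 he, rfl⟩ i hi x (by simpa using hx)
    exact ⟨_, Finset.mem_image_of_mem _ (hv.1.mem_toFinset.2 he'), hpre⟩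

variable {k : Type} [Field k]

theorem sum_leavittPathElem_edgeImage_eq_vertexGen (hf : IsPathHom f) (hmono : EdgeMonotone f)
    (hreg : RegularHom f) {v : G.V} (hv : RegularV G v) :
    ∑ e ∈ hv.1.toFinset, leavittPathElem k (FP.inclExt (f (FP.ofEdge e))) *
      leavittPathElem k (FP.star (f (FP.ofEdge e))) = vertexGen k H (vertexMap f v) := by
  have hsrc : ∀ e ∈ hv.1.toFinset, (f (FP.ofEdge e)).src = vertexMap f v := fun e he =>
    (hf.src_map_ofEdge e).trans (congrArg _ (hv.1.mem_toFinset.1 he))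
  have hinj : Set.InjOn (fun e => (f (FP.ofEdge e)).edges) hv.1.toFinset := fun e he e' he' h =>
    hmono.eq_of_prefix ((hsrc e he).trans (hsrc e' he').symm) ⟨[], (List.append_nil _).trans h⟩
  classical
  calc _ = ∑ e ∈ hv.1.toFinset, rangeProj k H (vertexMap f v) (f (FP.ofEdge e)).edges :=
        Finset.sum_congr rfl fun e he => by rw [leavittPathElem_inclExt_mul_star, hsrc e he]
    _ = _ := (Finset.sum_image hinj).symm.trans
        (isExhaustivePrefixFree_edgeImage hf hmono hreg hv).sum_rangeProj

end PathHom

-- Typed over `G.V ⊕ G.E ⊕ G.E` rather than `Gen G` because the relations `CohnRel` are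
-- elaborated over that sum type; `rw` sees through neither `Gen` nor `LPGraph.ext`, hence the
-- `erw`s below.
noncomputable def genImage (k : Type) [Field k] {G H : LPGraph} (f : G.FP → H.FP) :
    G.V ⊕ G.E ⊕ G.E → LeavittAlg k H
  | .inl v => vertexGen k H (vertexMap f v)
  | .inr (.inl e) => leavittPathElem k (f (FP.ofEdge e)).inclExt
  | .inr (.inr e) => leavittPathElem k (f (FP.ofEdge e)).star

section Construction

variable {k : Type} [Field k] {G H : LPGraph} {f : G.FP → H.FP}

theorem lift_genImage_eq_of_cohnRel (hf : IsPathHom f) (hvi : VertexInjective f)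
    (hmono : EdgeMonotone f) {a b : FreeAlgebra k (Gen G)} (h : CohnRel k G a b) :
    FreeAlgebra.lift k (genImage k f) a = FreeAlgebra.lift k (genImage k f) b := by
  cases h with
  | vtx v w =>
    erw [map_mul, FreeAlgebra.lift_ι_apply, FreeAlgebra.lift_ι_apply]
    rw [genImage, genImage]
    split_ifs with hvw
    · subst hvw
      erw [FreeAlgebra.lift_ι_apply]
      rw [genImage, vertexGen_mul_self]
    · erw [map_zero]
      exact vertexGen_mul_of_ne (hvw ∘ (hf.vertexMap_injective hvi ·))
  | src_edge e =>
    erw [map_mul, FreeAlgebra.lift_ι_apply, FreeAlgebra.lift_ι_apply]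
    rw [genImage, genImage, ← hf.src_map_ofEdge]
    exact vertexGen_mul_leavittPathElem (f (FP.ofEdge e)).inclExt
  | edge_tgt e =>
    erw [map_mul, FreeAlgebra.lift_ι_apply, FreeAlgebra.lift_ι_apply]
    rw [genImage, genImage, ← hf.tgt_map_ofEdge]
    exact leavittPathElem_mul_vertexGen (f (FP.ofEdge e)).inclExt
  | tgt_star e =>
    erw [map_mul, FreeAlgebra.lift_ι_apply, FreeAlgebra.lift_ι_apply]
    rw [genImage, genImage, ← hf.tgt_map_ofEdge]
    exact vertexGen_mul_leavittPathElem (f (FP.ofEdge e)).star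
  | star_src e =>
    erw [map_mul, FreeAlgebra.lift_ι_apply, FreeAlgebra.lift_ι_apply]
    rw [genImage, genImage, ← hf.src_map_ofEdge]
    exact leavittPathElem_mul_vertexGen (f (FP.ofEdge e)).star
  | cohn e e' =>
    erw [map_mul, FreeAlgebra.lift_ι_apply, FreeAlgebra.lift_ι_apply]
    rw [genImage, genImage]
    split_ifs with he
    · subst he
      erw [FreeAlgebra.lift_ι_apply]
      rw [genImage, leavittPathElem_star_mul_inclExt, hf.tgt_map_ofEdge]
    · erw [map_zero]
      exact leavittPathElem_star_mul_inclExt_eq_zero_of_not_le (fun h => he (hmono e e' h))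
        (fun h => he (hmono e' e h).symm)

theorem lift_genImage_eq_of_leavittRel (hf : IsPathHom f) (hvi : VertexInjective f)
    (hmono : EdgeMonotone f) (hreg : RegularHom f) ⦃a b : FreeAlgebra k (Gen G)⦄
    (h : LeavittRel k G a b) :
    FreeAlgebra.lift k (genImage k f) a = FreeAlgebra.lift k (genImage k f) b := by
  rcases h with h | ⟨v, hfin, hne, rfl, rfl⟩
  · exact lift_genImage_eq_of_cohnRel hf hvi hmono h
  · erw [map_sum, FreeAlgebra.lift_ι_apply]
    refine (Finset.sum_congr rfl fun e _ => ?_).trans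
      (sum_leavittPathElem_edgeImage_eq_vertexGen (k := k) hf hmono hreg ⟨hfin, hne⟩)
    erw [map_mul, FreeAlgebra.lift_ι_apply, FreeAlgebra.lift_ι_apply]
    rfl

end Construction

noncomputable def leavittMap (k : Type) [Field k] {G H : LPGraph} {f : G.FP → H.FP}
    (hf : IsPathHom f) (hvi : VertexInjective f) (hmono : EdgeMonotone f) (hreg : RegularHom f) :
    LeavittAlg k G →ₐ[k] LeavittAlg k H :=
  RingQuot.liftAlgHom k ⟨FreeAlgebra.lift k (genImage k f),
    lift_genImage_eq_of_leavittRel hf hvi hmono hreg⟩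

section LeavittMap

variable {k : Type} [Field k] {G H : LPGraph} {f : G.FP → H.FP}
variable (hf : IsPathHom f) (hvi : VertexInjective f) (hmono : EdgeMonotone f)
  (hreg : RegularHom f) {fbar : G.ext.FP → H.ext.FP}

theorem leavittMap_leavittMk (a : FreeAlgebra k (Gen G)) :
    leavittMap k hf hvi hmono hreg (leavittMk k G a) = FreeAlgebra.lift k (genImage k f) a :=
  RingQuot.liftAlgHom_mkAlgHom_apply k _ _ a

theorem leavittMap_leavittPathElem_ofEdge (hbar : IsBar f fbar) (x : G.ext.E) :
    leavittMap k hf hvi hmono hreg (leavittPathElem k (FP.ofEdge x)) =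
      leavittPathElem k (fbar (FP.ofEdge x)) := by
  rw [leavittPathElem_ofEdge]
  rcases x with e | e
  · rw [hbar.2.2.1 e]
    exact (leavittMap_leavittMk hf hvi hmono hreg _).trans (FreeAlgebra.lift_ι_apply _ _)
  · rw [hbar.2.2.2 e]
    exact (leavittMap_leavittMk hf hvi hmono hreg _).trans (FreeAlgebra.lift_ι_apply _ _)

theorem leavittMap_leavittPathElem_toFP (hbar : IsBar f fbar) {a b : G.ext.V}
    (p : G.ext.Path a b) :
    leavittMap k hf hvi hmono hreg (leavittPathElem k p.toFP) =
      leavittPathElem k (fbar p.toFP) := by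
  induction p with
  | nil v =>
    rw [show (Path.nil (G := G.ext) v).toFP = FP.ofVertex v from rfl,
      hbar.2.1 v _ (hf.map_ofVertex v)]
    exact (leavittMap_leavittMk hf hvi hmono hreg _).trans (FreeAlgebra.lift_ι_apply _ _)
  | cons x p ih =>
    obtain ⟨h, hcomp⟩ := hbar.1.2.2.2 (FP.ofEdge x) p.toFP rfl
    calc _ = leavittMap k hf hvi hmono hreg (leavittPathElem k (FP.ofEdge x)) *
          leavittMap k hf hvi hmono hreg (leavittPathElem k p.toFP) :=
          (congrArg _ (leavittPathElem_comp (FP.ofEdge x) p.toFP rfl)).trans (map_mul _ _ _)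
      _ = leavittPathElem k (fbar (FP.ofEdge x)) * leavittPathElem k (fbar p.toFP) := by
          rw [leavittMap_leavittPathElem_ofEdge hf hvi hmono hreg hbar, ih]
      _ = _ := (leavittPathElem_comp _ _ h).symm.trans (congrArg _ hcomp.symm)

theorem leavittMap_leavittPathElem (hbar : IsBar f fbar) (p : G.ext.FP) :
    leavittMap k hf hvi hmono hreg (leavittPathElem k p) = leavittPathElem k (fbar p) :=
  leavittMap_leavittPathElem_toFP hf hvi hmono hreg hbar p.2.2

end LeavittMap

end LPGraph

open LPGraph in
/-- The Leavitt path algebra construction is covariantly functorial on graphs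
and vertex-injective, monotone, regular path homomorphisms: the map
`f_*^L : L_k(E) → L_k(F)` given by `[χ_p] ↦ [χ_{f̄(p)}]` is a well-defined
(unique) algebra homomorphism; in particular
`Σ_{e ∈ s⁻¹(v)} [χ_{f̄(e)}][χ_{f̄(e)*}] = [χ_{f(v)}]` for every regular vertex
`v`; the assignment is functorial, and unital when restricted to graphs with
finitely many vertices and maps bijective on vertices. -/
theorem leavitt_algebra_functor (k : Type) [Field k] :
    (∀ (G H : LPGraph) (f : G.FP → H.FP) (fbar : G.ext.FP → H.ext.FP),
      IsPathHom f → VertexInjective f → EdgeMonotone f → RegularHom f → IsBar f fbar →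
      (∃! φ : LeavittAlg k G →ₐ[k] LeavittAlg k H,
        ∀ p : G.ext.FP, φ (leavittPathElem k p) = leavittPathElem k (fbar p)) ∧
      (∀ (v : G.V) (hv : RegularV G v),
        ∑ e ∈ hv.1.toFinset,
            leavittPathElem k (FP.inclExt (f (FP.ofEdge e))) *
              leavittPathElem k (FP.star (f (FP.ofEdge e))) =
          leavittPathElem k (FP.inclExt (f (FP.ofVertex v))))) ∧
    (∀ (G H K : LPGraph) (f : G.FP → H.FP) (g : H.FP → K.FP)
      (fbar : G.ext.FP → H.ext.FP) (gbar : H.ext.FP → K.ext.FP)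
      (φf : LeavittAlg k G →ₐ[k] LeavittAlg k H) (φg : LeavittAlg k H →ₐ[k] LeavittAlg k K),
      IsPathHom f → VertexInjective f → EdgeMonotone f → RegularHom f → IsBar f fbar →
      IsPathHom g → VertexInjective g → EdgeMonotone g → RegularHom g → IsBar g gbar →
      (∀ p : G.ext.FP, φf (leavittPathElem k p) = leavittPathElem k (fbar p)) →
      (∀ p : H.ext.FP, φg (leavittPathElem k p) = leavittPathElem k (gbar p)) →
      ∀ p : G.ext.FP, (φg.comp φf) (leavittPathElem k p) = leavittPathElem k (gbar (fbar p))) ∧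
    (∀ (G H : LPGraph), ∀ [Fintype G.V] [Fintype H.V],
      ∀ (f : G.FP → H.FP) (fbar : G.ext.FP → H.ext.FP),
      IsPathHom f → VertexInjective f → EdgeMonotone f → RegularHom f → IsBar f fbar →
      (∀ w : H.V, ∃ v : G.V, f (FP.ofVertex v) = FP.ofVertex w) →
      ∀ φ : LeavittAlg k G →ₐ[k] LeavittAlg k H,
        (∀ p : G.ext.FP, φ (leavittPathElem k p) = leavittPathElem k (fbar p)) →
        φ (∑ v : G.V, leavittPathElem k (FP.ofVertex (G := G.ext) v)) =
          ∑ w : H.V, leavittPathElem k (FP.ofVertex (G := H.ext) w)) := by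
  refine ⟨fun G H f fbar hf hvi hmono hreg hbar => ⟨?_, fun v hv => ?_⟩, ?_, ?_⟩
  · refine ⟨leavittMap k hf hvi hmono hreg, leavittMap_leavittPathElem hf hvi hmono hreg hbar,
      fun ψ hψ => LeavittAlg.algHom_ext fun p => ?_⟩
    rw [hψ, leavittMap_leavittPathElem hf hvi hmono hreg hbar]
  · rw [sum_leavittPathElem_edgeImage_eq_vertexGen hf hmono hreg hv, hf.map_ofVertex]
    rfl
  · intro G H K f g fbar gbar φf φg _ _ _ _ _ _ _ _ _ _ hφf hφg p
    rw [AlgHom.comp_apply, hφf, hφg]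
  · intro G H _ _ f fbar hf hvi _ _ hbar hsurj φ hφ
    have hvertex : ∀ v : G.V, φ (leavittPathElem k (FP.ofVertex (G := G.ext) v)) =
        vertexGen k H (vertexMap f v) := fun v => by
      rw [hφ, hbar.2.1 v _ (hf.map_ofVertex v)]
      rfl
    rw [map_sum, Finset.sum_congr rfl fun v _ => hvertex v]
    exact Fintype.sum_bijective _ ⟨hf.vertexMap_injective hvi, hf.vertexMap_surjective hsurj⟩
      _ _ fun _ => rfl
end
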